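/- arXiv:math-ph/0502008 — 13 statements merged into one kernel-verified Lean document; each statement's English description precedes it below -/
import Mathlib

section
/- Let g be a finite-dimensional two-step nilpotent Lie algebra over a field k of characteristic zero, i.e. [g,[g,g]] = 0. Then the bilinear product x·y := (1/2)[x,y] is a Novikov structure on g; in particular every two-step nilpotent Lie algebra over k admits a Novikov structure. -/
/-- On a finite-dimensional two-step nilpotent Lie algebra over a field of characteristic
zero, the product `x · y = (1/2) • ⁅x, y⁆` is a Novikov structure; in particular every
two-step nilpotent Lie algebra admits a Novikov structure. -/
theorem twoStepNilpotent_half_bracket_novikov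
    (k : Type*) [Field k] [CharZero k]
    (g : Type*) [LieRing g] [LieAlgebra k g] [FiniteDimensional k g]
    (h2 : ∀ x y z : g, ⁅x, ⁅y, z⁆⁆ = 0)
    (mul : g → g → g)
    (hmul : ∀ x y : g, mul x y = (2⁻¹ : k) • ⁅x, y⁆) :
    (∀ x y z : g,
        mul x (mul y z) - mul (mul x y) z = mul y (mul x z) - mul (mul y x) z) ∧
    (∀ x y z : g, mul (mul x y) z = mul (mul x z) y) ∧
    (∀ x y : g, mul x y - mul y x = ⁅x, y⁆) := by
  have h2' : ∀ x y z : g, ⁅⁅x, y⁆, z⁆ = 0 := by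
    intro x y z
    rw [← lie_skew, h2, neg_zero]
  refine ⟨?_, ?_, ?_⟩
  · intro x y z
    simp [hmul, h2, h2', smul_lie, lie_smul]
  · intro x y z
    simp [hmul, h2', smul_lie]
  · intro x y
    rw [hmul, hmul, ← lie_skew y x, smul_neg, sub_neg_eq_add, ← two_smul k,
      smul_smul]
    norm_num
end

section
/- Let g be a Lie algebra over a field k and let T : g → g be a linear operator satisfying the classical Yang–Baxter equation [T(x),T(y)] = T([T(x),y] + [x,T(y)]) for all x,y ∈ g, and additionally [x, T([y,T(z)])] = [y, T([x,T(z)])] for all x,y,z ∈ g. Then the bilinear product x·y := [T(x), y] satisfies the left-symmetric identity x·(y·z) − (x·y)·z = y·(x·z) − (y·x)·z, the Novikov identity (x·y)·z = (x·z)·y, and its commutator is the bracket [x,y]_T, i.e. x·y − y·x = [T(x),y] + [x,T(y)] for all x,y,z ∈ g. -/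
/-- If `T` satisfies the classical Yang–Baxter equation and the additional identity
`[x, T[y, Tz]] = [y, T[x, Tz]]`, then `x·y := [Tx, y]` is left-symmetric, Novikov, and its
commutator is the `T`-bracket `[x,y]_T = [Tx,y] + [x,Ty]`. -/
theorem novikov_from_r_matrix
    (k : Type*) [Field k]
    (g : Type*) [LieRing g] [LieAlgebra k g]
    (T : g →ₗ[k] g)
    (hCYBE : ∀ x y : g, ⁅T x, T y⁆ = T (⁅T x, y⁆ + ⁅x, T y⁆))
    (hextra : ∀ x y z : g, ⁅x, T ⁅y, T z⁆⁆ = ⁅y, T ⁅x, T z⁆⁆)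
    (mul : g → g → g)
    (hmul : ∀ x y : g, mul x y = ⁅T x, y⁆) :
    (∀ x y z : g,
        mul x (mul y z) - mul (mul x y) z = mul y (mul x z) - mul (mul y x) z) ∧
    (∀ x y z : g, mul (mul x y) z = mul (mul x z) y) ∧
    (∀ x y : g, mul x y - mul y x = ⁅T x, y⁆ + ⁅x, T y⁆) := by
  refine ⟨?_, ?_, ?_⟩
  · intro x y z
    simp only [hmul]
    rw [leibniz_lie (T x) (T y) z, hCYBE]
    have h : ⁅T y, x⁆ = -⁅x, T y⁆ := by rw [lie_skew]
    simp only [map_add, add_lie, h, map_neg, neg_lie]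
    abel
  · intro x y z
    simp only [hmul]
    have h1 : T ⁅T x, y⁆ = -T ⁅y, T x⁆ := by rw [← lie_skew, map_neg]
    have h2 : T ⁅T x, z⁆ = -T ⁅z, T x⁆ := by rw [← lie_skew, map_neg]
    rw [h1, h2, neg_lie, neg_lie, ← lie_skew (T ⁅y, T x⁆) z, ← lie_skew (T ⁅z, T x⁆) y,
      hextra z y x]
  · intro x y
    simp only [hmul]
    rw [← lie_skew x (T y)]
    abel
end

section
/- Let g be a Lie algebra over a field k and T : g → g a linear operator satisfying the classical Yang–Baxter equation [T(x),T(y)] = T([T(x),y] + [x,T(y)]). Define the T-bracket [x,y]_T := [T(x),y] + [x,T(y)], and define subspaces D₁ := g, D_{n+1} := span{ [x,y]_T : x, y ∈ D_n }. Then D_n ⊆ g^{(n)} for all n ≥ 1, where g^{(1)} = g, g^{(n+1)} = [g^{(n)}, g^{(n)}] is the derived series of g. In particular, if g is r-step solvable then D_{r+1} = 0. -/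
/-- Let `T` satisfy the CYBE and let `D 0 = g`, `D (n+1) = span{[x,y]_T : x, y ∈ D n}`
(so `D n` is the paper's `D_{n+1}`).  Then `D n ⊆ g^{(n+1)} = derivedSeries k g n`, and in
particular if `g` is `r`-step solvable (`g^{(r+1)} = derivedSeries k g r = 0`) then
`D r = D_{r+1} = 0`. -/
theorem tBracket_derived_series
    (k : Type*) [Field k] [CharZero k]
    (g : Type*) [LieRing g] [LieAlgebra k g]
    (T : g →ₗ[k] g)
    (hCYBE : ∀ x y : g, ⁅T x, T y⁆ = T (⁅T x, y⁆ + ⁅x, T y⁆))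
    (D : ℕ → Submodule k g)
    (hD1 : D 0 = ⊤)
    (hDsucc : ∀ n : ℕ, D (n + 1) =
      Submodule.span k {z : g | ∃ x ∈ D n, ∃ y ∈ D n, z = ⁅T x, y⁆ + ⁅x, T y⁆}) :
    (∀ n : ℕ, ∀ z ∈ D n, z ∈ LieAlgebra.derivedSeries k g n) ∧
    (∀ r : ℕ, LieAlgebra.derivedSeries k g r = ⊥ → D r = ⊥) := by
  have key : ∀ n : ℕ, ∀ z ∈ D n,
      z ∈ LieAlgebra.derivedSeries k g n ∧ T z ∈ LieAlgebra.derivedSeries k g n := by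
    intro n
    induction n with
    | zero =>
      intro z _
      constructor <;> simp [LieAlgebra.derivedSeries_def]
    | succ n ih =>
      intro z hz
      rw [hDsucc] at hz
      refine Submodule.span_induction (p := fun z _ =>
        z ∈ LieAlgebra.derivedSeries k g (n + 1) ∧
        T z ∈ LieAlgebra.derivedSeries k g (n + 1)) ?_ ?_ ?_ ?_ hz
      · rintro w ⟨x, hx, y, hy, rfl⟩
        obtain ⟨hx1, hx2⟩ := ih x hx
        obtain ⟨hy1, hy2⟩ := ih y hy
        have hDS : LieAlgebra.derivedSeries k g (n + 1) =
            ⁅LieAlgebra.derivedSeries k g n, LieAlgebra.derivedSeries k g n⁆ :=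
          by rw [LieAlgebra.derivedSeries_def, LieAlgebra.derivedSeries_def,
            LieAlgebra.derivedSeriesOfIdeal_succ]
        constructor
        · rw [hDS]
          exact add_mem (LieSubmodule.lie_mem_lie hx2 hy1) (LieSubmodule.lie_mem_lie hx1 hy2)
        · rw [← hCYBE, hDS]
          exact LieSubmodule.lie_mem_lie hx2 hy2
      · simp
      · rintro a b _ _ ⟨ha1, ha2⟩ ⟨hb1, hb2⟩
        exact ⟨add_mem ha1 hb1, by rw [map_add]; exact add_mem ha2 hb2⟩
      · rintro c a _ ⟨ha1, ha2⟩
        exact ⟨(LieAlgebra.derivedSeries k g (n + 1)).smul_mem c ha1,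
          by rw [map_smul]; exact (LieAlgebra.derivedSeries k g (n + 1)).smul_mem c ha2⟩
  refine ⟨fun n z hz => (key n z hz).1, fun r hr => ?_⟩
  rw [eq_bot_iff]
  intro z hz
  have := (key r z hz).1
  rw [hr] at this
  simpa using this
end

section
/- With the extension data (a, b, φ, Ω) as in the context, suppose (a,b) ↦ a·b is a commutative associative bilinear product on a, (x,y) ↦ x·y is a left-symmetric product on b (i.e. x·(y·z) − (x·y)·z = y·(x·z) − (y·x)·z and x·y − y·x = [x,y]), ω : b × b → a is a bilinear map, and φ₁, φ₂ : b → End(a) are Lie algebra representations. Then the product (a,x) ∘ (b,y) := (a·b + φ₁(y)a + φ₂(x)b + ω(x,y), x·y) defines a left-symmetric structure on the Lie algebra g = a × b (i.e. ∘ is left-symmetric and u ∘ v − v ∘ u = [u,v] for all u,v ∈ g) if and only if for all a,b,c ∈ a and all x,y,z ∈ b: (i) ω(x,y) − ω(y,x) = Ω(x,y); (ii) φ₂(x) − φ₁(x) = φ(x); (iii) φ₂(x)ω(y,z) − φ₂(y)ω(x,z) − φ₁(z)Ω(x,y) = ω(y, x·z) − ω(x, y·z) + ω([x,y], z); (iv)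 a·ω(y,z) + φ₁(y·z)a = φ₂(y)φ₁(z)a − φ₁(z)φ(y)a; (v) a·(φ₁(z)b) = b·(φ₁(z)a); (vi) φ₂(y)(a·c) − a·(φ₂(y)c) = (φ(y)a)·c; (vii) Ω(x,y)·c = 0. -/
/-- Lifting of left-symmetric structures through an abelian extension
`0 → a → g → b → 0` with data `(a, b, φ, Ω)`: the product
`(a,x) ∘ (b,y) = (a·b + φ₁(y)a + φ₂(x)b + ω(x,y), x·y)` on `g = a × b` is a
left-symmetric structure if and only if the seven conditions (i)–(vii) hold. -/
theorem lift_leftSymmetric_iff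
    (k : Type*) [Field k] [CharZero k]
    (a : Type*) [AddCommGroup a] [Module k a]
    (b : Type*) [LieRing b] [LieAlgebra k b]
    (φ : b →ₗ[k] Module.End k a)
    (hφ : ∀ x y : b, φ ⁅x, y⁆ = φ x * φ y - φ y * φ x)
    (Ω : b →ₗ[k] b →ₗ[k] a)
    (hΩskew : ∀ x y : b, Ω x y = - Ω y x)
    (hΩcoc : ∀ x y z : b,
      φ x (Ω y z) - φ y (Ω x z) + φ z (Ω x y)
        = Ω ⁅x, y⁆ z - Ω ⁅x, z⁆ y + Ω ⁅y, z⁆ x)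
    (mulA : a →ₗ[k] a →ₗ[k] a)
    (hAcomm : ∀ p q : a, mulA p q = mulA q p)
    (hAassoc : ∀ p q r : a, mulA (mulA p q) r = mulA p (mulA q r))
    (mulB : b →ₗ[k] b →ₗ[k] b)
    (hBls : ∀ x y z : b,
      mulB x (mulB y z) - mulB (mulB x y) z = mulB y (mulB x z) - mulB (mulB y x) z)
    (hBlie : ∀ x y : b, mulB x y - mulB y x = ⁅x, y⁆)
    (ω : b →ₗ[k] b →ₗ[k] a)
    (φ₁ φ₂ : b →ₗ[k] Module.End k a)
    (hφ₁ : ∀ x y : b, φ₁ ⁅x, y⁆ = φ₁ x * φ₁ y - φ₁ y * φ₁ x)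
    (hφ₂ : ∀ x y : b, φ₂ ⁅x, y⁆ = φ₂ x * φ₂ y - φ₂ y * φ₂ x)
    (circ : a × b → a × b → a × b)
    (hcirc : ∀ u v : a × b,
      circ u v = (mulA u.1 v.1 + φ₁ v.2 u.1 + φ₂ u.2 v.1 + ω u.2 v.2, mulB u.2 v.2))
    (br : a × b → a × b → a × b)
    (hbr : ∀ u v : a × b,
      br u v = (φ u.2 v.1 - φ v.2 u.1 + Ω u.2 v.2, ⁅u.2, v.2⁆)) :
    ((∀ u v w : a × b,
        circ u (circ v w) - circ (circ u v) w
          = circ v (circ u w) - circ (circ v u) w) ∧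
      (∀ u v : a × b, circ u v - circ v u = br u v))
    ↔
    ((∀ x y : b, ω x y - ω y x = Ω x y) ∧
     (∀ x : b, φ₂ x - φ₁ x = φ x) ∧
     (∀ x y z : b,
        φ₂ x (ω y z) - φ₂ y (ω x z) - φ₁ z (Ω x y)
          = ω y (mulB x z) - ω x (mulB y z) + ω ⁅x, y⁆ z) ∧
     (∀ (p : a) (y z : b),
        mulA p (ω y z) + φ₁ (mulB y z) p = φ₂ y (φ₁ z p) - φ₁ z (φ y p)) ∧
     (∀ (p q : a) (z : b), mulA p (φ₁ z q) = mulA q (φ₁ z p)) ∧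
     (∀ (p r : a) (y : b),
        φ₂ y (mulA p r) - mulA p (φ₂ y r) = mulA (φ y p) r) ∧
     (∀ (x y : b) (r : a), mulA (Ω x y) r = 0)) := by
  have msub : ∀ s t r : a, mulA (s - t) r = mulA s r - mulA t r := by
    intro s t r; rw [map_sub, LinearMap.sub_apply]
  constructor
  · rintro ⟨hLS, hcomm⟩
    -- first-component commutator identity
    have hc : ∀ (p q : a) (x y : b),
        (mulA p q + φ₁ y p + φ₂ x q + ω x y)
          - (mulA q p + φ₁ x q + φ₂ y p + ω y x)
          = φ x q - φ y p + Ω x y := by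
      intro p q x y
      have h := hcomm (p, x) (q, y)
      simp only [hcirc, hbr, Prod.mk_sub_mk, Prod.mk.injEq] at h
      exact h.1
    have h1 : ∀ x y : b, ω x y - ω y x = Ω x y := by
      intro x y
      have h := hc 0 0 x y
      simpa using h
    have h2 : ∀ x : b, φ₂ x - φ₁ x = φ x := by
      intro x
      ext q
      have h := hc 0 q x 0
      simp only [map_zero, LinearMap.zero_apply, add_zero, zero_add, sub_zero,
        zero_sub] at h
      simpa [LinearMap.sub_apply] using h
    have esub : ∀ (y : b) (p : a), φ y p = φ₂ y p - φ₁ y p := by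
      intro y p; rw [← h2 y, LinearMap.sub_apply]
    refine ⟨h1, h2, ?_, ?_, ?_, ?_, ?_⟩
    · -- (iii)
      intro x y z
      have h := hLS (0, x) (0, y) (0, z)
      simp only [hcirc, Prod.mk_sub_mk, Prod.mk.injEq, map_zero,
        LinearMap.zero_apply, add_zero, zero_add] at h
      have e1 : φ₁ z (ω x y) - φ₁ z (ω y x) = φ₁ z (Ω x y) := by
        rw [← map_sub, h1]
      have e2 : ω (mulB x y) z - ω (mulB y x) z = ω ⁅x, y⁆ z := by
        rw [← LinearMap.sub_apply, ← map_sub, hBlie]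
      linear_combination (norm := module) h.1 + e1 + e2
    · -- (iv)
      intro p y z
      have h := hLS (p, 0) (0, y) (0, z)
      simp only [hcirc, Prod.mk_sub_mk, Prod.mk.injEq, map_zero,
        LinearMap.zero_apply, add_zero, zero_add] at h
      have E2 : φ₁ z (φ y p) = φ₁ z (φ₂ y p) - φ₁ z (φ₁ y p) := by
        rw [esub, map_sub]
      linear_combination (norm := module) h.1 + E2
    · -- (v)
      intro p q z
      have h := hLS (p, 0) (q, 0) (0, z)
      simp only [hcirc, Prod.mk_sub_mk, Prod.mk.injEq, map_zero,
        LinearMap.zero_apply, add_zero, zero_add] at h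
      have PZ : φ₁ z (mulA p q) = φ₁ z (mulA q p) := by rw [hAcomm p q]
      linear_combination (norm := module) h.1 + PZ
    · -- (vi)
      intro p r y
      have h := hLS (p, 0) (0, y) (r, 0)
      simp only [hcirc, Prod.mk_sub_mk, Prod.mk.injEq, map_zero,
        LinearMap.zero_apply, add_zero, zero_add] at h
      have E : mulA (φ y p) r = mulA (φ₂ y p) r - mulA (φ₁ y p) r := by
        rw [esub, msub]
      linear_combination (norm := module) - h.1 - E
    · -- (vii)
      intro x y r
      have h := hLS (0, x) (0, y) (r, 0)
      simp only [hcirc, Prod.mk_sub_mk, Prod.mk.injEq, map_zero,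
        LinearMap.zero_apply, add_zero, zero_add] at h
      have W : mulA (Ω x y) r = mulA (ω x y) r - mulA (ω y x) r := by
        rw [← h1 x y, msub]
      have PHI2 : φ₂ (mulB x y) r - φ₂ (mulB y x) r
          = φ₂ x (φ₂ y r) - φ₂ y (φ₂ x r) := by
        rw [← LinearMap.sub_apply, ← map_sub, hBlie, hφ₂, LinearMap.sub_apply,
          Module.End.mul_apply, Module.End.mul_apply]
      linear_combination (norm := module) W - h.1 - PHI2
  · rintro ⟨h1, h2, h3, h4, h5, h6, h7⟩
    have esub : ∀ (y : b) (p : a), φ y p = φ₂ y p - φ₁ y p := by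
      intro y p; rw [← h2 y, LinearMap.sub_apply]
    constructor
    · rintro ⟨p, x⟩ ⟨q, y⟩ ⟨r, z⟩
      simp only [hcirc, Prod.mk_sub_mk, Prod.mk.injEq]
      refine ⟨?_, hBls x y z⟩
      simp only [map_add, LinearMap.add_apply]
      have A1 : mulA p (mulA q r) = mulA q (mulA p r) := by
        rw [← hAassoc, hAcomm p q, hAassoc]
      have A2 : mulA (mulA p q) r = mulA (mulA q p) r := by rw [hAcomm p q]
      have PZ : φ₁ z (mulA p q) = φ₁ z (mulA q p) := by rw [hAcomm p q]
      have V : mulA p (φ₁ z q) = mulA q (φ₁ z p) := h5 p q z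
      have VIp : φ₂ y (mulA p r) - mulA p (φ₂ y r)
          = mulA (φ₂ y p) r - mulA (φ₁ y p) r := by
        rw [h6 p r y, esub, msub]
      have VIq : φ₂ x (mulA q r) - mulA q (φ₂ x r)
          = mulA (φ₂ x q) r - mulA (φ₁ x q) r := by
        rw [h6 q r x, esub, msub]
      have IVp : mulA p (ω y z) + φ₁ (mulB y z) p
          = φ₂ y (φ₁ z p) - (φ₁ z (φ₂ y p) - φ₁ z (φ₁ y p)) := by
        rw [h4 p y z, esub, map_sub]
      have IVq : mulA q (ω x z) + φ₁ (mulB x z) q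
          = φ₂ x (φ₁ z q) - (φ₁ z (φ₂ x q) - φ₁ z (φ₁ x q)) := by
        rw [h4 q x z, esub, map_sub]
      have PHI2 : φ₂ (mulB x y) r - φ₂ (mulB y x) r
          = φ₂ x (φ₂ y r) - φ₂ y (φ₂ x r) := by
        rw [← LinearMap.sub_apply, ← map_sub, hBlie, hφ₂, LinearMap.sub_apply,
          Module.End.mul_apply, Module.End.mul_apply]
      have W7 : mulA (ω x y) r - mulA (ω y x) r = 0 := by
        rw [← msub, h1, h7]
      have e1 : φ₁ z (ω x y) - φ₁ z (ω y x) = φ₁ z (Ω x y) := by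
        rw [← map_sub, h1]
      have e2 : ω (mulB x y) z - ω (mulB y x) z = ω ⁅x, y⁆ z := by
        rw [← LinearMap.sub_apply, ← map_sub, hBlie]
      have III := h3 x y z
      linear_combination (norm := module)
        A1 - A2 - PZ + V - VIp + VIq + IVp - IVq - PHI2 - W7 + III - e1 - e2
    · rintro ⟨p, x⟩ ⟨q, y⟩
      simp only [hcirc, hbr, Prod.mk_sub_mk, Prod.mk.injEq]
      refine ⟨?_, hBlie x y⟩
      linear_combination (norm := module)
        hAcomm p q - esub x q + esub y p + h1 x y
end

section
/- With the extension data (a, b, φ, Ω) as in the context, suppose (a,b) ↦ a·b is a commutative associative bilinear product on a, (x,y) ↦ x·y is a left-symmetric product on b, ω : b × b → a is bilinear, and φ₁, φ₂ : b → End(a) are Lie algebra representations, and suppose the product (a,x) ∘ (b,y) := (a·b + φ₁(y)a + φ₂(x)b + ω(x,y), x·y) defines a left-symmetric structure on g = a × b. Then ∘ is a Novikov structure on g (i.e. additionally (u∘v)∘w = (u∘w)∘v for all u,v,w ∈ g) if and only if for all b,c ∈ a and x,y,z ∈ b: (i) φ₁(z)ω(x,y) − φ₁(y)ω(x,z) =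 ω(x·z, y) − ω(x·y, z); (ii) ω(x,y)·c + φ₂(x·y)c = φ₁(y)φ₂(x)c; (iii) φ₁(x)φ₁(y) = φ₁(y)φ₁(x); (iv) (φ₂(x)b)·c = (φ₂(x)c)·b; (v) φ₁(z)(a·b) = (φ₁(z)a)·b for all a,b ∈ a; (vi) (x·y)·z = (x·z)·y. -/
/-- Given extension data `(a, b, φ, Ω)` and a product
`(a,x) ∘ (b,y) = (a·b + φ₁(y)a + φ₂(x)b + ω(x,y), x·y)` on `g = a × b` which is already a
left-symmetric structure, the product is Novikov, i.e. `(u∘v)∘w = (u∘w)∘v`, if and only if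
the six conditions (i)–(vi) hold. -/
theorem lift_novikov_iff
    (k : Type*) [Field k] [CharZero k]
    (a : Type*) [AddCommGroup a] [Module k a]
    (b : Type*) [LieRing b] [LieAlgebra k b]
    (φ : b →ₗ[k] Module.End k a)
    (hφ : ∀ x y : b, φ ⁅x, y⁆ = φ x * φ y - φ y * φ x)
    (Ω : b →ₗ[k] b →ₗ[k] a)
    (hΩskew : ∀ x y : b, Ω x y = - Ω y x)
    (hΩcoc : ∀ x y z : b,
      φ x (Ω y z) - φ y (Ω x z) + φ z (Ω x y)
        = Ω ⁅x, y⁆ z - Ω ⁅x, z⁆ y + Ω ⁅y, z⁆ x)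
    (mulA : a →ₗ[k] a →ₗ[k] a)
    (hAcomm : ∀ p q : a, mulA p q = mulA q p)
    (hAassoc : ∀ p q r : a, mulA (mulA p q) r = mulA p (mulA q r))
    (mulB : b →ₗ[k] b →ₗ[k] b)
    (hBls : ∀ x y z : b,
      mulB x (mulB y z) - mulB (mulB x y) z = mulB y (mulB x z) - mulB (mulB y x) z)
    (hBlie : ∀ x y : b, mulB x y - mulB y x = ⁅x, y⁆)
    (ω : b →ₗ[k] b →ₗ[k] a)
    (φ₁ φ₂ : b →ₗ[k] Module.End k a)
    (hφ₁ : ∀ x y : b, φ₁ ⁅x, y⁆ = φ₁ x * φ₁ y - φ₁ y * φ₁ x)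
    (hφ₂ : ∀ x y : b, φ₂ ⁅x, y⁆ = φ₂ x * φ₂ y - φ₂ y * φ₂ x)
    (circ : a × b → a × b → a × b)
    (hcirc : ∀ u v : a × b,
      circ u v = (mulA u.1 v.1 + φ₁ v.2 u.1 + φ₂ u.2 v.1 + ω u.2 v.2, mulB u.2 v.2))
    (br : a × b → a × b → a × b)
    (hbr : ∀ u v : a × b,
      br u v = (φ u.2 v.1 - φ v.2 u.1 + Ω u.2 v.2, ⁅u.2, v.2⁆))
    (hLS : ∀ u v w : a × b,
      circ u (circ v w) - circ (circ u v) w = circ v (circ u w) - circ (circ v u) w)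
    (hLie : ∀ u v : a × b, circ u v - circ v u = br u v) :
    (∀ u v w : a × b, circ (circ u v) w = circ (circ u w) v)
    ↔
    ((∀ x y z : b,
        φ₁ z (ω x y) - φ₁ y (ω x z) = ω (mulB x z) y - ω (mulB x y) z) ∧
     (∀ (x y : b) (c : a),
        mulA (ω x y) c + φ₂ (mulB x y) c = φ₁ y (φ₂ x c)) ∧
     (∀ x y : b, φ₁ x * φ₁ y = φ₁ y * φ₁ x) ∧
     (∀ (x : b) (p c : a), mulA (φ₂ x p) c = mulA (φ₂ x c) p) ∧
     (∀ (z : b) (p q : a), φ₁ z (mulA p q) = mulA (φ₁ z p) q) ∧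
     (∀ x y z : b, mulB (mulB x y) z = mulB (mulB x z) y)) := by
  constructor
  · intro h
    refine ⟨?_, ?_, ?_, ?_, ?_, ?_⟩
    · intro x y z
      have H := h (0, x) (0, y) (0, z)
      simp only [hcirc, map_zero, LinearMap.zero_apply, zero_add, add_zero,
        Prod.mk.injEq] at H
      rw [sub_eq_sub_iff_add_eq_add]
      exact H.1.trans (add_comm _ _)
    · intro x y c
      have H := h (0, x) (0, y) (c, 0)
      simp only [hcirc, map_zero, LinearMap.zero_apply, zero_add, add_zero,
        Prod.mk.injEq] at H
      exact H.1
    · intro x y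
      ext p
      have H := h (p, 0) (0, y) (0, x)
      simp only [hcirc, map_zero, LinearMap.zero_apply, zero_add, add_zero,
        Prod.mk.injEq] at H
      simpa [Module.End.mul_apply] using H.1
    · intro x p c
      have H := h (0, x) (p, 0) (c, 0)
      simp only [hcirc, map_zero, LinearMap.zero_apply, zero_add, add_zero,
        Prod.mk.injEq] at H
      exact H.1
    · intro z p q
      have H := h (p, 0) (q, 0) (0, z)
      simp only [hcirc, map_zero, LinearMap.zero_apply, zero_add, add_zero,
        Prod.mk.injEq] at H
      exact H.1
    · intro x y z
      have H := h (0, x) (0, y) (0, z)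
      simp only [hcirc, map_zero, LinearMap.zero_apply, zero_add, add_zero,
        Prod.mk.injEq] at H
      exact H.2
  · rintro ⟨h1, h2, h3, h4, h5, h6⟩ ⟨p, x⟩ ⟨q, y⟩ ⟨r, z⟩
    rw [hcirc, hcirc, hcirc, hcirc]
    refine Prod.ext ?_ (h6 x y z)
    simp only [map_add, LinearMap.add_apply]
    have eA : mulA (mulA p q) r = mulA (mulA p r) q := by
      rw [hAassoc, hAcomm q r, ← hAassoc]
    have e3 : φ₁ z (φ₁ y p) = φ₁ y (φ₁ z p) := by
      have := congrArg (fun f : Module.End k a => f p) (h3 z y)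
      simpa [Module.End.mul_apply] using this
    have e1 : φ₁ z (ω x y)
        = φ₁ y (ω x z) + ω (mulB x z) y - ω (mulB x y) z := by
      have := h1 x y z
      rw [sub_eq_sub_iff_add_eq_add] at this
      rw [eq_sub_iff_add_eq]
      exact this.trans (add_comm _ _)
    have e2L : φ₁ z (φ₂ x q) = mulA (ω x z) q + φ₂ (mulB x z) q :=
      (h2 x z q).symm
    have e2R : φ₁ y (φ₂ x r) = mulA (ω x y) r + φ₂ (mulB x y) r :=
      (h2 x y r).symm
    rw [eA, h5 z p q, h5 y p r, h4 x q r, e3, e1, e2L, e2R]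
    abel
end

section
/- Let g = (a, b, φ, Ω) be a two-step solvable Lie algebra as in the context, let ω : b × b → a be a bilinear map, and let φ₁, φ₂ : b → End(a) be linear maps. Then the product (a,x) ∘ (b,y) := (φ₁(y)a + φ₂(x)b + ω(x,y), 0) defines a left-symmetric structure on g if and only if for all x,y,z ∈ b: ω(x,y) − ω(y,x) = Ω(x,y); φ₂(x) − φ₁(x) = φ(x); φ₂(x)ω(y,z) − φ₂(y)ω(x,z) = φ₁(z)Ω(x,y); and φ₁(x)φ₂(y) − φ₂(y)φ₁(x) = φ₁(x)φ₁(y). It defines a Novikov structure on g if in addition φ₁(z)ω(x,y) = φ₁(y)ω(x,z), φ₁(x)φ₂(y) = 0, and φ₁(x)φ₁(y) = φ₁(y)φ₁(x) for all x,y,z ∈ b. In particular, if φ₁ = 0, the product defines a Novikov structure if and only if it defines a left-symmetric structure. -/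
/-- For a two-step solvable Lie algebra `g = (a, b, φ, Ω)` (with `a`, `b` abelian) and
trivial products on `a` and `b`, the product
`(a,x) ∘ (b,y) = (φ₁(y)a + φ₂(x)b + ω(x,y), 0)` is a left-symmetric structure iff the four
stated conditions hold; it is moreover Novikov if in addition the three extra conditions
hold; and if `φ₁ = 0` then it is Novikov iff it is left-symmetric. -/
theorem twoStepSolvable_trivial_products_lift
    (k : Type*) [Field k] [CharZero k]
    (a : Type*) [AddCommGroup a] [Module k a]
    (b : Type*) [AddCommGroup b] [Module k b]
    (φ : b →ₗ[k] Module.End k a)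
    (hφcomm : ∀ x y : b, φ x * φ y = φ y * φ x)
    (Ω : b →ₗ[k] b →ₗ[k] a)
    (hΩskew : ∀ x y : b, Ω x y = - Ω y x)
    (hΩcoc : ∀ x y z : b, φ x (Ω y z) - φ y (Ω x z) + φ z (Ω x y) = 0)
    (ω : b →ₗ[k] b →ₗ[k] a)
    (φ₁ φ₂ : b →ₗ[k] Module.End k a)
    (circ : a × b → a × b → a × b)
    (hcirc : ∀ u v : a × b, circ u v = (φ₁ v.2 u.1 + φ₂ u.2 v.1 + ω u.2 v.2, 0))
    (br : a × b → a × b → a × b)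
    (hbr : ∀ u v : a × b, br u v = (φ u.2 v.1 - φ v.2 u.1 + Ω u.2 v.2, 0)) :
    (((∀ u v w : a × b,
        circ u (circ v w) - circ (circ u v) w
          = circ v (circ u w) - circ (circ v u) w) ∧
      (∀ u v : a × b, circ u v - circ v u = br u v))
      ↔
      ((∀ x y : b, ω x y - ω y x = Ω x y) ∧
       (∀ x : b, φ₂ x - φ₁ x = φ x) ∧
       (∀ x y z : b, φ₂ x (ω y z) - φ₂ y (ω x z) = φ₁ z (Ω x y)) ∧
       (∀ x y : b, φ₁ x * φ₂ y - φ₂ y * φ₁ x = φ₁ x * φ₁ y)))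
    ∧
    (((∀ x y : b, ω x y - ω y x = Ω x y) ∧
      (∀ x : b, φ₂ x - φ₁ x = φ x) ∧
      (∀ x y z : b, φ₂ x (ω y z) - φ₂ y (ω x z) = φ₁ z (Ω x y)) ∧
      (∀ x y : b, φ₁ x * φ₂ y - φ₂ y * φ₁ x = φ₁ x * φ₁ y)) →
     ((∀ x y z : b, φ₁ z (ω x y) = φ₁ y (ω x z)) ∧
      (∀ x y : b, φ₁ x * φ₂ y = 0) ∧
      (∀ x y : b, φ₁ x * φ₁ y = φ₁ y * φ₁ x)) →
     ((∀ u v w : a × b,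
        circ u (circ v w) - circ (circ u v) w
          = circ v (circ u w) - circ (circ v u) w) ∧
      (∀ u v : a × b, circ u v - circ v u = br u v) ∧
      (∀ u v w : a × b, circ (circ u v) w = circ (circ u w) v)))
    ∧
    (φ₁ = 0 →
      (((∀ u v w : a × b,
          circ u (circ v w) - circ (circ u v) w
            = circ v (circ u w) - circ (circ v u) w) ∧
        (∀ u v : a × b, circ u v - circ v u = br u v) ∧
        (∀ u v w : a × b, circ (circ u v) w = circ (circ u w) v))
        ↔
       ((∀ u v w : a × b,
          circ u (circ v w) - circ (circ u v) w
            = circ v (circ u w) - circ (circ v u) w) ∧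
        (∀ u v : a × b, circ u v - circ v u = br u v)))) := by
  have key : ((∀ x y : b, ω x y - ω y x = Ω x y) ∧
       (∀ x : b, φ₂ x - φ₁ x = φ x) ∧
       (∀ x y z : b, φ₂ x (ω y z) - φ₂ y (ω x z) = φ₁ z (Ω x y)) ∧
       (∀ x y : b, φ₁ x * φ₂ y - φ₂ y * φ₁ x = φ₁ x * φ₁ y)) →
      ((∀ u v w : a × b,
        circ u (circ v w) - circ (circ u v) w
          = circ v (circ u w) - circ (circ v u) w) ∧
      (∀ u v : a × b, circ u v - circ v u = br u v)) := by
    rintro ⟨hC1, hC2, hC3, hC4⟩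
    have h2' : ∀ (x : b) (c : a), φ₂ x c = φ x c + φ₁ x c := by
      intro x c
      have h := congrArg (fun f : Module.End k a => f c) (hC2 x)
      simp only [LinearMap.sub_apply] at h
      exact eq_add_of_sub_eq h
    have hc4' : ∀ (z y : b) (c : a),
        φ₁ z (φ₂ y c) = φ₁ z (φ₁ y c) + φ₂ y (φ₁ z c) := by
      intro z y c
      have h := congrArg (fun f : Module.End k a => f c) (hC4 z y)
      simp only [LinearMap.sub_apply, Module.End.mul_apply] at h
      exact eq_add_of_sub_eq h
    have hD : ∀ (x y : b) (c : a),
        φ₁ x (φ y c) = φ y (φ₁ x c) + φ₁ y (φ₁ x c) := by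
      intro x y c
      have h := hc4' x y c
      rw [h2' y c, map_add, add_comm (φ₁ x (φ₁ y c))] at h
      have h' : φ₁ x (φ y c) = φ₂ y (φ₁ x c) := add_right_cancel h
      rw [h', h2' y (φ₁ x c)]
    have hφpt : ∀ (x y : b) (c : a), φ x (φ y c) = φ y (φ x c) := by
      intro x y c
      have h := congrArg (fun f : Module.End k a => f c) (hφcomm x y)
      simpa only [Module.End.mul_apply] using h
    have h22 : ∀ (x y : b) (c : a), φ₂ x (φ₂ y c) = φ₂ y (φ₂ x c) := by
      intro x y c
      simp only [h2', map_add]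
      rw [hφpt x y c, hD x y c, hD y x c]
      abel
    constructor
    · intro u v w
      obtain ⟨ua, ux⟩ := u; obtain ⟨va, vx⟩ := v; obtain ⟨wa, wx⟩ := w
      simp only [hcirc, map_zero, LinearMap.zero_apply, map_add, zero_add, add_zero,
        Prod.mk_sub_mk, Prod.mk.injEq, sub_zero, sub_self, and_true]
      rw [hc4' wx ux va, hc4' wx vx ua, h22 ux vx wa,
        eq_add_of_sub_eq (hC3 ux vx wx),
        eq_add_of_sub_eq (hC1 ux vx), map_add (φ₁ wx)]
      abel
    · intro u v
      obtain ⟨ua, ux⟩ := u; obtain ⟨va, vx⟩ := v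
      simp only [hcirc, hbr, Prod.mk_sub_mk, Prod.mk.injEq, sub_zero, sub_self, and_true]
      rw [h2' ux va, h2' vx ua, eq_add_of_sub_eq (hC1 ux vx)]
      abel
  refine ⟨⟨?_, key⟩, ?_, ?_⟩
  · rintro ⟨hP, hQ⟩
    have hC1 : ∀ x y : b, ω x y - ω y x = Ω x y := by
      intro x y
      have h := hQ (0, x) (0, y)
      simp only [hcirc, hbr, map_zero, LinearMap.zero_apply, zero_add, add_zero,
        sub_zero, zero_sub, sub_self, and_true, Prod.mk_sub_mk, Prod.mk.injEq] at h
      exact h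
    have hC2 : ∀ x : b, φ₂ x - φ₁ x = φ x := by
      intro x
      ext c
      have h := hQ (0, x) (c, 0)
      simp only [hcirc, hbr, map_zero, LinearMap.zero_apply, zero_add, add_zero,
        sub_zero, sub_self, and_true, Prod.mk_sub_mk, Prod.mk.injEq] at h
      simpa only [LinearMap.sub_apply] using h
    refine ⟨hC1, hC2, ?_, ?_⟩
    · intro x y z
      have h := hP (0, x) (0, y) (0, z)
      simp only [hcirc, map_zero, LinearMap.zero_apply, zero_add, add_zero,
        Prod.mk_sub_mk, Prod.mk.injEq, sub_zero, sub_self, and_true] at h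
      have h2 : φ₁ z (ω x y) - φ₁ z (ω y x) = φ₁ z (Ω x y) := by
        rw [← map_sub, hC1]
      rw [← h2]
      exact sub_eq_sub_iff_sub_eq_sub.mp h
    · intro x y
      ext c
      have h := hP (0, y) (c, 0) (0, x)
      simp only [hcirc, map_zero, LinearMap.zero_apply, zero_add, add_zero,
        Prod.mk_sub_mk, Prod.mk.injEq, sub_zero, sub_self, and_true, zero_sub] at h
      have h1 := h
      simp only [LinearMap.sub_apply, Module.End.mul_apply]
      rw [← neg_sub, h1, neg_neg]
  · rintro hconds ⟨hE1, hE2, hE3⟩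
    obtain ⟨hP, hQ⟩ := key hconds
    refine ⟨hP, hQ, ?_⟩
    have hE2' : ∀ (x y : b) (c : a), φ₁ x (φ₂ y c) = 0 := by
      intro x y c
      have h := congrArg (fun f : Module.End k a => f c) (hE2 x y)
      simpa only [Module.End.mul_apply, LinearMap.zero_apply] using h
    have hE3' : ∀ (x y : b) (c : a), φ₁ x (φ₁ y c) = φ₁ y (φ₁ x c) := by
      intro x y c
      have h := congrArg (fun f : Module.End k a => f c) (hE3 x y)
      simpa only [Module.End.mul_apply] using h
    intro u v w
    obtain ⟨ua, ux⟩ := u; obtain ⟨va, vx⟩ := v; obtain ⟨wa, wx⟩ := w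
    simp only [hcirc, map_zero, LinearMap.zero_apply, map_add, zero_add, add_zero,
      Prod.mk.injEq, and_true]
    rw [hE2' wx ux va, hE2' vx ux wa, hE3' wx vx ua, hE1 ux vx wx]
  · intro h0
    constructor
    · rintro ⟨hP, hQ, _⟩
      exact ⟨hP, hQ⟩
    · rintro ⟨hP, hQ⟩
      refine ⟨hP, hQ, ?_⟩
      intro u v w
      simp [hcirc, h0]
end

section
/- Let k be a field of characteristic zero, a a k-vector space regarded as an abelian Lie algebra, b a Lie algebra over k, and φ : b → End(a) a Lie algebra representation, and let g = a ⋊_φ b be the semidirect product, i.e. g = a × b with bracket [(a,x),(b,y)] = (φ(x)b − φ(y)a, [x,y]). If (x,y) ↦ x·y is a left-symmetric structure on b, then (a,x) ∘ (b,y) := (φ(x)b, x·y) is a left-symmetric structure on g. If moreover the product on b is a Novikov structure and φ(x·y) = 0 for all x,y ∈ b, then ∘ is a Novikov structure on g. -/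
/-- On a semidirect product `g = a ⋊_φ b` (with `a` abelian), a left-symmetric structure
on `b` lifts to the left-symmetric structure `(a,x) ∘ (b,y) = (φ(x)b, x·y)` on `g`; and if
the product on `b` is Novikov with `φ(x·y) = 0` for all `x, y`, then `∘` is Novikov. -/
theorem semidirect_lift_lsa_novikov
    (k : Type*) [Field k] [CharZero k]
    (a : Type*) [AddCommGroup a] [Module k a]
    (b : Type*) [LieRing b] [LieAlgebra k b]
    (φ : b →ₗ[k] Module.End k a)
    (hφ : ∀ x y : b, φ ⁅x, y⁆ = φ x * φ y - φ y * φ x)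
    (mulB : b →ₗ[k] b →ₗ[k] b)
    (hBls : ∀ x y z : b,
      mulB x (mulB y z) - mulB (mulB x y) z = mulB y (mulB x z) - mulB (mulB y x) z)
    (hBlie : ∀ x y : b, mulB x y - mulB y x = ⁅x, y⁆)
    (circ : a × b → a × b → a × b)
    (hcirc : ∀ u v : a × b, circ u v = (φ u.2 v.1, mulB u.2 v.2))
    (br : a × b → a × b → a × b)
    (hbr : ∀ u v : a × b, br u v = (φ u.2 v.1 - φ v.2 u.1, ⁅u.2, v.2⁆)) :
    ((∀ u v w : a × b,
        circ u (circ v w) - circ (circ u v) w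
          = circ v (circ u w) - circ (circ v u) w) ∧
     (∀ u v : a × b, circ u v - circ v u = br u v)) ∧
    ((∀ x y z : b, mulB (mulB x y) z = mulB (mulB x z) y) →
     (∀ x y : b, φ (mulB x y) = 0) →
     ∀ u v w : a × b, circ (circ u v) w = circ (circ u w) v) := by
  refine ⟨⟨?_, ?_⟩, ?_⟩
  · intro u v w
    simp only [hcirc]
    have h := hφ u.2 v.2
    rw [← hBlie] at h
    have h1 := congrArg (fun f => f w.1) h
    simp only [map_sub, LinearMap.sub_apply, Module.End.mul_apply] at h1
    ext
    · simp only [Prod.fst_sub]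
      rw [sub_eq_sub_iff_sub_eq_sub]
      exact h1.symm
    · simp only [Prod.snd_sub]
      exact hBls u.2 v.2 w.2
  · intro u v
    simp only [hcirc, hbr]
    ext
    · simp
    · simp [hBlie]
  · intro hN h0 u v w
    simp only [hcirc]
    ext
    · simp [h0]
    · simp [hN u.2 v.2 w.2]
end

section
/- Let g = (a, b, φ, Ω) be a two-step solvable Lie algebra as in the context. If there exists e ∈ b such that φ(e) ∈ End(a) is an isomorphism, then g admits a Novikov structure. Explicitly, the product (a,x) ∘ (b,y) := (φ(x)b + ω(x,y), 0), where ω(x,y) := φ(e)^{-1} φ(x) Ω(e,y), is a Novikov structure on g. -/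
/-- For a two-step solvable Lie algebra `g = (a, b, φ, Ω)`, if `φ(e)` is an isomorphism of
`a` for some `e ∈ b` (with inverse `ψ`), then the product
`(a,x) ∘ (b,y) = (φ(x)b + ω(x,y), 0)`, where `ω(x,y) = φ(e)⁻¹ φ(x) Ω(e,y)`, is a Novikov
structure on `g`; in particular `g` admits a Novikov structure. -/
theorem twoStepSolvable_phi_iso_novikov
    (k : Type*) [Field k] [CharZero k]
    (a : Type*) [AddCommGroup a] [Module k a]
    (b : Type*) [AddCommGroup b] [Module k b]
    (φ : b →ₗ[k] Module.End k a)
    (hφcomm : ∀ x y : b, φ x * φ y = φ y * φ x)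
    (Ω : b →ₗ[k] b →ₗ[k] a)
    (hΩskew : ∀ x y : b, Ω x y = - Ω y x)
    (hΩcoc : ∀ x y z : b, φ x (Ω y z) - φ y (Ω x z) + φ z (Ω x y) = 0)
    (e : b) (ψ : Module.End k a)
    (hψ₁ : φ e * ψ = 1) (hψ₂ : ψ * φ e = 1)
    (ω : b → b → a)
    (hω : ∀ x y : b, ω x y = ψ (φ x (Ω e y)))
    (circ : a × b → a × b → a × b)
    (hcirc : ∀ u v : a × b, circ u v = (φ u.2 v.1 + ω u.2 v.2, 0))
    (br : a × b → a × b → a × b)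
    (hbr : ∀ u v : a × b, br u v = (φ u.2 v.1 - φ v.2 u.1 + Ω u.2 v.2, 0)) :
    (∀ u v w : a × b,
        circ u (circ v w) - circ (circ u v) w
          = circ v (circ u w) - circ (circ v u) w) ∧
    (∀ u v w : a × b, circ (circ u v) w = circ (circ u w) v) ∧
    (∀ u v : a × b, circ u v - circ v u = br u v) := by

  have hψcomm : ∀ x : b, φ x * ψ = ψ * φ x := by
    intro x
    have h : φ x * ψ = ψ * φ e * (φ x * ψ) := by rw [hψ₂, one_mul]
    calc φ x * ψ = ψ * φ e * (φ x * ψ) := h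
      _ = ψ * (φ x * (φ e * ψ)) := by
          rw [mul_assoc, ← mul_assoc (φ e), hφcomm e x, mul_assoc]
      _ = ψ * φ x := by rw [hψ₁, mul_one]
  have hψc : ∀ (x : b) (v : a), φ x (ψ v) = ψ (φ x v) := by
    intro x v
    have := congrArg (fun f : Module.End k a => f v) (hψcomm x)
    simpa [Module.End.mul_apply] using this
  have hφc : ∀ (x y : b) (v : a), φ x (φ y v) = φ y (φ x v) := by
    intro x y v
    have := congrArg (fun f : Module.End k a => f v) (hφcomm x y)
    simpa [Module.End.mul_apply] using this
  have hψe : ∀ v : a, ψ (φ e v) = v := by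
    intro v
    have := congrArg (fun f : Module.End k a => f v) hψ₂
    simpa [Module.End.mul_apply] using this
  refine ⟨?_, ?_, ?_⟩
  · intro u v w
    simp only [hcirc, hω]
    ext
    · simp only [map_add, map_zero, add_zero, LinearMap.zero_apply]
      rw [hφc u.2 v.2 w.1, hψc u.2, hψc v.2, hφc u.2 v.2]
    · simp
  · intro u v w
    simp only [hcirc, hω]
    simp
  · intro u v
    simp only [hcirc, hbr, hω]
    ext
    · simp only []
      show φ u.2 v.1 + ψ (φ u.2 (Ω e v.2)) - (φ v.2 u.1 + ψ (φ v.2 (Ω e u.2)))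
          = φ u.2 v.1 - φ v.2 u.1 + Ω u.2 v.2
      have hc := hΩcoc u.2 v.2 e
      rw [hΩskew v.2 e, hΩskew u.2 e, map_neg, map_neg] at hc
      have key : φ u.2 (Ω e v.2) - φ v.2 (Ω e u.2) = φ e (Ω u.2 v.2) := by
        have h2 : φ u.2 (Ω e v.2) - φ v.2 (Ω e u.2) - φ e (Ω u.2 v.2)
            = -(-(φ u.2 ((Ω e) v.2)) - -(φ v.2 ((Ω e) u.2)) + φ e ((Ω u.2) v.2)) := by
          abel
        rw [← sub_eq_zero, h2, hc, neg_zero]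
      have : ψ (φ u.2 (Ω e v.2)) - ψ (φ v.2 (Ω e u.2)) = Ω u.2 v.2 := by
        rw [← map_sub, key, hψe]
      rw [← this]; abel
    · simp
end

section
/- Every finite-dimensional three-step nilpotent Lie algebra g over a field k of characteristic zero (i.e. [g,[g,[g,g]]] = 0) admits a left-symmetric (affine) structure: there exists a bilinear product · on g with x·(y·z) − (x·y)·z = y·(x·z) − (y·x)·z and x·y − y·x = [x,y] for all x,y,z ∈ g. -/
/-- Scheuneman's theorem: every finite-dimensional three-step nilpotent Lie algebra over a
field of characteristic zero admits a left-symmetric (affine) structure. -/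
theorem threeStepNilpotent_admits_lsa
    (k : Type*) [Field k] [CharZero k]
    (g : Type*) [LieRing g] [LieAlgebra k g] [FiniteDimensional k g]
    (h3 : ∀ x y z w : g, ⁅x, ⁅y, ⁅z, w⁆⁆⁆ = 0) :
    ∃ mul : g →ₗ[k] g →ₗ[k] g,
      (∀ x y z : g,
        mul x (mul y z) - mul (mul x y) z = mul y (mul x z) - mul (mul y x) z) ∧
      (∀ x y : g, mul x y - mul y x = ⁅x, y⁆) := by
  classical
  -- the derived subalgebra as a submodule
  set I : Submodule k g := Submodule.span k {z : g | ∃ x y : g, ⁅x, y⁆ = z} with hI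
  obtain ⟨J, hJ⟩ := Submodule.exists_isCompl I
  set q : g →ₗ[k] I := I.linearProjOfIsCompl J hJ with hq
  set p : g →ₗ[k] g := I.subtype ∘ₗ q with hp
  have hmem : ∀ a b : g, ⁅a, b⁆ ∈ I := fun a b => Submodule.subset_span ⟨a, b, rfl⟩
  have hfix : ∀ z, z ∈ I → p z = z := by
    intro z hz
    have : q z = ⟨z, hz⟩ := Submodule.linearProjOfIsCompl_apply_left hJ ⟨z, hz⟩
    simp [hp, this]
  have hpI : ∀ a : g, p a ∈ I := fun a => (q a).2
  -- key vanishing lemmas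
  have hA : ∀ u, u ∈ I → ∀ c d : g, ⁅u, ⁅c, d⁆⁆ = 0 := by
    intro u hu
    induction hu using Submodule.span_induction with
    | mem x hx =>
      obtain ⟨a, b, rfl⟩ := hx
      intro c d
      rw [lie_lie, h3, h3, sub_zero]
    | zero => intro c d; simp
    | add x y hx hy ihx ihy => intro c d; rw [add_lie, ihx, ihy, add_zero]
    | smul a x hx ihx => intro c d; rw [smul_lie, ihx, smul_zero]
  have hD : ∀ u, u ∈ I → ∀ c d : g, ⁅c, ⁅u, d⁆⁆ = 0 := by
    intro u hu
    induction hu using Submodule.span_induction with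
    | mem x hx =>
      obtain ⟨a, b, rfl⟩ := hx
      intro c d
      rw [lie_lie, lie_sub, h3, h3, sub_zero]
    | zero => intro c d; simp
    | add x y hx hy ihx ihy => intro c d; rw [add_lie, lie_add, ihx, ihy, add_zero]
    | smul a x hx ihx => intro c d; rw [smul_lie, lie_smul, ihx, smul_zero]
  have hB : ∀ u, u ∈ I → ∀ v, v ∈ I → ⁅u, v⁆ = 0 := by
    intro u hu v hv
    induction hv using Submodule.span_induction with
    | mem x hx => obtain ⟨a, b, rfl⟩ := hx; exact hA u hu a b
    | zero => simp
    | add x y hx hy ihx ihy => rw [lie_add, ihx, ihy, add_zero]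
    | smul a x hx ihx => rw [lie_smul, ihx, smul_zero]
  have hC : ∀ u, u ∈ I → ∀ c d : g, ⁅⁅u, c⁆, d⁆ = 0 := by
    intro u hu c d
    rw [lie_lie, hA u hu, hD u hu, sub_zero]
  -- specialized vanishing lemmas for `p`
  have hpb : ∀ a b : g, p ⁅a, b⁆ = ⁅a, b⁆ := fun a b => hfix _ (hmem a b)
  have hpp : ∀ a : g, p (p a) = p a := fun a => hfix _ (hpI a)
  have z1 : ∀ a c d : g, ⁅p a, ⁅c, d⁆⁆ = 0 := fun a c d => hA _ (hpI a) c d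
  have z2 : ∀ a c d : g, ⁅c, ⁅p a, d⁆⁆ = 0 := fun a c d => hD _ (hpI a) c d
  have z3 : ∀ a c d : g, ⁅c, ⁅d, p a⁆⁆ = 0 := by
    intro a c d
    rw [← lie_skew d (p a), lie_neg, z2, neg_zero]
  have z4 : ∀ a b : g, ⁅p a, p b⁆ = 0 := fun a b => hB _ (hpI a) _ (hpI b)
  have z5 : ∀ a c d : g, ⁅⁅p a, c⁆, d⁆ = 0 := fun a c d => hC _ (hpI a) c d
  have z6 : ∀ a c d : g, ⁅⁅c, p a⁆, d⁆ = 0 := by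
    intro a c d
    rw [← lie_skew c (p a), neg_lie, z5, neg_zero]
  have z7 : ∀ a b c d : g, ⁅⁅a, b⁆, ⁅c, d⁆⁆ = 0 := fun a b c d => hA _ (hmem a b) c d
  have z8 : ∀ a b c d : g, ⁅c, ⁅⁅a, b⁆, d⁆⁆ = 0 := fun a b c d => hD _ (hmem a b) c d
  have z9 : ∀ a b c d : g, ⁅c, ⁅d, ⁅a, b⁆⁆⁆ = 0 := fun a b c d => h3 c d a b
  have z10 : ∀ a b c d : g, ⁅⁅⁅a, b⁆, c⁆, d⁆ = 0 := fun a b c d => hC _ (hmem a b) c d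
  have z11 : ∀ a b c d : g, ⁅⁅c, ⁅a, b⁆⁆, d⁆ = 0 := by
    intro a b c d
    rw [← lie_skew c, neg_lie, z10, neg_zero]
  have z12 : ∀ a b c : g, ⁅⁅a, b⁆, p c⁆ = 0 := by
    intro a b c
    rw [← lie_skew, z1, neg_zero]
  -- the left-symmetric product
  refine ⟨LinearMap.mk₂ k
      (fun x y => (1 / 2 : k) • ⁅x, y⁆ - (1 / 6 : k) • ⁅p x, y⁆ + (1 / 6 : k) • ⁅x, p y⁆)
      (by intro a b y; simp only [add_lie, lie_add, map_add]; module)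
      (by intro c a y; simp only [smul_lie, lie_smul, map_smul]; module)
      (by intro x a b; simp only [add_lie, lie_add, map_add]; module)
      (by intro c x a; simp only [smul_lie, lie_smul, map_smul]; module), ?_, ?_⟩
  · intro x y z
    simp only [LinearMap.mk₂_apply, map_add, map_sub, map_smul, LinearMap.sub_apply,
      LinearMap.add_apply, LinearMap.smul_apply, lie_add, add_lie, lie_sub,
      sub_lie, lie_smul, smul_lie, hpb, hpp, z1, z2, z3, z4, z5, z6, z7, z8, z9, z10, z11, z12,
      smul_zero, lie_zero, zero_lie, add_zero, zero_add, sub_zero, zero_sub, smul_neg,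
      neg_zero, smul_smul]
    rw [lie_lie x y z, lie_lie y x z]
    module
  · intro x y
    simp only [LinearMap.mk₂_apply]
    rw [← lie_skew x y, ← lie_skew (p x) y, ← lie_skew x (p y)]
    module
end

section
/- Let g be a finite-dimensional three-step nilpotent Lie algebra over a field k of characteristic zero such that dim_k g/[g,g] = 2 (equivalently, g is generated as a Lie algebra by two elements). Then g admits a Novikov structure. -/
section NovikovAux

variable {k : Type*} [Field k] {g : Type*} [LieRing g] [LieAlgebra k g]

/-- The submodule spanned by all brackets. -/
private def novD (k : Type*) [Field k] (g : Type*) [LieRing g] [LieAlgebra k g] :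
    Submodule k g :=
  Submodule.span k {w : g | ∃ p q : g, ⁅p, q⁆ = w}

private lemma nov_br_mem (p q : g) : ⁅p, q⁆ ∈ novD k g :=
  Submodule.subset_span ⟨p, q, rfl⟩

private lemma novZ (h3 : ∀ x y z w : g, ⁅x, ⁅y, ⁅z, w⁆⁆⁆ = 0)
    {e : g} (he : e ∈ novD k g) (w z : g) : ⁅w, ⁅z, e⁆⁆ = 0 := by
  induction he using Submodule.span_induction with
  | mem x hx => obtain ⟨p, q, rfl⟩ := hx; exact h3 w z p q
  | zero => simp
  | add x y hx hy ihx ihy => simp [ihx, ihy]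
  | smul t x hx ihx => simp [ihx]

private lemma novZ' (h3 : ∀ x y z w : g, ⁅x, ⁅y, ⁅z, w⁆⁆⁆ = 0)
    {e : g} (he : e ∈ novD k g) (w z : g) : ⁅w, ⁅e, z⁆⁆ = 0 := by
  rw [show ⁅e, z⁆ = -⁅z, e⁆ from neg_eq_iff_eq_neg.mp (lie_skew z e), lie_neg,
    novZ h3 he w z, neg_zero]

private lemma novDD (h3 : ∀ x y z w : g, ⁅x, ⁅y, ⁅z, w⁆⁆⁆ = 0)
    {e : g} (he : e ∈ novD k g) {d : g} (hd : d ∈ novD k g) : ⁅e, d⁆ = 0 := by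
  induction he using Submodule.span_induction with
  | mem x hx =>
    obtain ⟨p, q, rfl⟩ := hx
    rw [lie_lie, novZ h3 hd p q, novZ h3 hd q p, sub_zero]
  | zero => simp
  | add x y hx hy ihx ihy => simp [add_lie, ihx, ihy]
  | smul t x hx ihx => simp [smul_lie, ihx]

/-- If the whole algebra is spanned by one element together with all brackets,
then the algebra is abelian. -/
private lemma nov_degenerate (h3 : ∀ x y z w : g, ⁅x, ⁅y, ⁅z, w⁆⁆⁆ = 0)
    (p : g) (hp : ∀ x : g, x ∈ Submodule.span k {p} ⊔ novD k g) (x y : g) :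
    ⁅x, y⁆ = 0 := by
  set M : Submodule k g := (novD k g).map ((LieAlgebra.ad k g p : g →ₗ[k] g)) with hM
  have hmem : ∀ x y : g, ⁅x, y⁆ ∈ M := by
    intro x y
    obtain ⟨m, hm, d, hd, hx⟩ := Submodule.mem_sup.mp (hp x)
    obtain ⟨s, hs⟩ := Submodule.mem_span_singleton.mp hm
    obtain ⟨m', hm', e, he, hy⟩ := Submodule.mem_sup.mp (hp y)
    obtain ⟨t, ht⟩ := Submodule.mem_span_singleton.mp hm'
    have hxy : ⁅x, y⁆ = s • ⁅p, e⁆ - t • ⁅p, d⁆ + ⁅d, e⁆ := by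
      rw [← hx, ← hy, ← hs, ← ht]
      simp only [lie_add, add_lie, lie_smul, smul_lie, lie_self, smul_zero, smul_neg,
        zero_add, add_zero]
      rw [show ⁅d, p⁆ = -⁅p, d⁆ from neg_eq_iff_eq_neg.mp (lie_skew p d)]
      simp only [smul_neg]
      abel
    rw [hxy, novDD h3 hd he, add_zero]
    refine Submodule.sub_mem _ (Submodule.smul_mem _ _ ?_) (Submodule.smul_mem _ _ ?_)
    · exact ⟨e, he, by simp⟩
    · exact ⟨d, hd, by simp⟩
  have hDM : novD k g ≤ M := by
    rw [novD, Submodule.span_le]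
    rintro w ⟨x, y, rfl⟩
    exact hmem x y
  obtain ⟨e, he, h1⟩ := hmem x y
  obtain ⟨e', he', h2⟩ := hDM he
  rw [← h1, ← h2]
  have h4 : (LieAlgebra.ad k g p : g →ₗ[k] g) ((LieAlgebra.ad k g p : g →ₗ[k] g) e')
      = ⁅p, ⁅p, e'⁆⁆ := by simp
  rw [h4]
  exact novZ h3 he' p p

/-- Separating functional. -/
private lemma nov_sep (W : Submodule k g) (v : g) (hv : v ∉ W) :
    ∃ F : g →ₗ[k] k, F v = 1 ∧ ∀ w ∈ W, F w = 0 := by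
  have hv' : W.mkQ v ≠ 0 := by
    simpa [Submodule.Quotient.mk_eq_zero] using hv
  obtain ⟨φ, hφ⟩ : ∃ φ : Module.Dual k (g ⧸ W), φ (W.mkQ v) ≠ 0 := by
    by_contra h
    push_neg at h
    exact hv' ((Module.forall_dual_apply_eq_zero_iff k _).mp h)
  refine ⟨(φ (W.mkQ v))⁻¹ • (φ.comp W.mkQ), ?_, ?_⟩
  · simp only [LinearMap.smul_apply, LinearMap.coe_comp, Function.comp_apply, smul_eq_mul]
    exact inv_mul_cancel₀ hφ
  · intro w hw
    have hw0 : W.mkQ w = 0 := (Submodule.Quotient.mk_eq_zero _).mpr hw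
    simp [hw0]

end NovikovAux

/-- Every finite-dimensional three-step nilpotent Lie algebra over a field of
characteristic zero which is generated (as a Lie algebra) by two elements admits a
Novikov structure. -/
theorem threeStepNilpotent_twoGenerated_novikov
    (k : Type*) [Field k] [CharZero k]
    (g : Type*) [LieRing g] [LieAlgebra k g] [FiniteDimensional k g]
    (h3 : ∀ x y z w : g, ⁅x, ⁅y, ⁅z, w⁆⁆⁆ = 0)
    (hgen : ∃ x y : g, LieSubalgebra.lieSpan k g {x, y} = ⊤) :
    ∃ mul : g →ₗ[k] g →ₗ[k] g,
      (∀ x y z : g,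
        mul x (mul y z) - mul (mul x y) z = mul y (mul x z) - mul (mul y x) z) ∧
      (∀ x y z : g, mul (mul x y) z = mul (mul x z) y) ∧
      (∀ x y : g, mul x y - mul y x = ⁅x, y⁆) := by
  classical
  by_cases hab : ∀ x y : g, ⁅x, y⁆ = 0
  · exact ⟨0, by simp, by simp, by simp [hab]⟩
  · obtain ⟨a, b, hgen⟩ := hgen
    -- every element decomposes over a, b and brackets
    have htop : ∀ x : g, x ∈ Submodule.span k {a, b} ⊔ novD k g := by
      intro x
      let S : LieSubalgebra k g :=
        { (Submodule.span k {a, b} ⊔ novD k g : Submodule k g) with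
          lie_mem' := fun {u v} _ _ => Submodule.mem_sup_right (nov_br_mem (k := k) u v) }
      have hle : LieSubalgebra.lieSpan k g {a, b} ≤ S := by
        rw [LieSubalgebra.lieSpan_le]
        rintro w (rfl | rfl)
        · exact Submodule.mem_sup_left (Submodule.subset_span (by simp))
        · exact Submodule.mem_sup_left (Submodule.subset_span (by simp))
      have hx : x ∈ LieSubalgebra.lieSpan k g {a, b} := by
        rw [hgen]; exact LieSubalgebra.mem_top x
      exact hle hx
    -- nondegeneracy of the generators
    have hna : a ∉ Submodule.span k {b} ⊔ novD k g := by
      intro ha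
      refine hab (nov_degenerate (k := k) h3 b fun x => ?_)
      refine (sup_le (Submodule.span_le.mpr ?_) le_sup_right :
        Submodule.span k {a, b} ⊔ novD k g ≤ _) (htop x)
      rintro w (rfl | rfl)
      · exact ha
      · exact Submodule.mem_sup_left (Submodule.subset_span rfl)
    have hnb : b ∉ Submodule.span k {a} ⊔ novD k g := by
      intro hb
      refine hab (nov_degenerate (k := k) h3 a fun x => ?_)
      refine (sup_le (Submodule.span_le.mpr ?_) le_sup_right :
        Submodule.span k {a, b} ⊔ novD k g ≤ _) (htop x)
      rintro w (rfl | rfl)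
      · exact Submodule.mem_sup_left (Submodule.subset_span rfl)
      · exact hb
    obtain ⟨F, hFa, hFW⟩ := nov_sep (Submodule.span k {b} ⊔ novD k g) a hna
    obtain ⟨G, hGb, hGW⟩ := nov_sep (Submodule.span k {a} ⊔ novD k g) b hnb
    have hFb : F b = 0 := hFW b (Submodule.mem_sup_left (Submodule.subset_span rfl))
    have hGa : G a = 0 := hGW a (Submodule.mem_sup_left (Submodule.subset_span rfl))
    have hFD : ∀ d ∈ novD k g, F d = 0 := fun d hd => hFW d (Submodule.mem_sup_right hd)
    have hGD : ∀ d ∈ novD k g, G d = 0 := fun d hd => hGW d (Submodule.mem_sup_right hd)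
    have hFbr : ∀ x y : g, F ⁅x, y⁆ = 0 := fun x y => hFD _ (nov_br_mem x y)
    have hGbr : ∀ x y : g, G ⁅x, y⁆ = 0 := fun x y => hGD _ (nov_br_mem x y)
    -- decomposition lemma
    have hdec : ∀ x : g, x - F x • a - G x • b ∈ novD k g := by
      intro x
      obtain ⟨m, hm, d, hd, hx⟩ := Submodule.mem_sup.mp (htop x)
      obtain ⟨s, t, hst⟩ := Submodule.mem_span_pair.mp hm
      have hFx : F x = s := by
        rw [← hx, ← hst]; simp [hFa, hFb, hFD d hd]
      have hGx : G x = t := by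
        rw [← hx, ← hst]; simp [hGa, hGb, hGD d hd]
      have hxd : x - F x • a - G x • b = d := by
        rw [hFx, hGx, ← hx, ← hst]; abel
      rw [hxd]; exact hd
    -- the two central atoms
    obtain ⟨U, hU⟩ : ∃ u : g, ⁅a, ⁅a, b⁆⁆ = u := ⟨_, rfl⟩
    obtain ⟨V, hV⟩ : ∃ v : g, ⁅b, ⁅a, b⁆⁆ = v := ⟨_, rfl⟩
    -- the key structural lemma: all double brackets
    have KL : ∀ x y z : g, ⁅x, ⁅y, z⁆⁆ = (F y * G z - G y * F z) • (F x • U + G x • V) := by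
      intro x y z
      have hx' := hdec x
      have hy' := hdec y
      have hz' := hdec z
      set xb := x - F x • a - G x • b with hxb
      set yb := y - F y • a - G y • b with hyb
      set zb := z - F z • a - G z • b with hzb
      have hxe : x = F x • a + G x • b + xb := by rw [hxb]; abel
      have hye : y = F y • a + G y • b + yb := by rw [hyb]; abel
      have hze : z = F z • a + G z • b + zb := by rw [hzb]; abel
      have K1 : ∀ w u : g, ⁅w, ⁅u, zb⁆⁆ = 0 := novZ h3 hz'
      have K1' : ∀ w u : g, ⁅w, ⁅zb, u⁆⁆ = 0 := novZ' h3 hz'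
      have K2 : ∀ w u : g, ⁅w, ⁅u, yb⁆⁆ = 0 := novZ h3 hy'
      have K2' : ∀ w u : g, ⁅w, ⁅yb, u⁆⁆ = 0 := novZ' h3 hy'
      have K3 : ∀ u w : g, ⁅xb, ⁅u, w⁆⁆ = 0 := fun u w => novDD h3 hx' (nov_br_mem u w)
      have hba : ⁅b, a⁆ = -⁅a, b⁆ := neg_eq_iff_eq_neg.mp (lie_skew a b)
      conv_lhs => rw [hxe, hye, hze]
      simp only [add_lie, lie_add, smul_lie, lie_smul, K1, K1', K2, K2', K3, lie_self,
        lie_zero, zero_lie, smul_zero, add_zero, zero_add, hba, lie_neg, smul_neg, hU, hV]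
      module
    have KL' : ∀ x y z : g, ⁅⁅x, y⁆, z⁆ = -((F x * G y - G x * F y) • (F z • U + G z • V)) := by
      intro x y z
      rw [show ⁅⁅x, y⁆, z⁆ = -⁅z, ⁅x, y⁆⁆ from neg_eq_iff_eq_neg.mp (lie_skew z ⁅x, y⁆),
        KL z x y]
    -- the Novikov product
    let m : g →ₗ[k] g →ₗ[k] g := LinearMap.mk₂ k
      (fun x y => (2 : k)⁻¹ • (⁅x, y⁆ + F y • ⁅a, x⁆ + F x • ⁅a, y⁆))
      (fun x₁ x₂ y => by
        simp only [add_lie, lie_add, map_add, add_smul]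
        module)
      (fun t x y => by
        simp only [smul_lie, lie_smul, map_smul, smul_eq_mul, mul_smul]
        module)
      (fun x y₁ y₂ => by
        simp only [lie_add, map_add, add_smul, smul_add]
        module)
      (fun t x y => by
        simp only [lie_smul, map_smul, smul_eq_mul, mul_smul]
        module)
    have hm : ∀ x y : g, m x y = (2 : k)⁻¹ • (⁅x, y⁆ + F y • ⁅a, x⁆ + F x • ⁅a, y⁆) :=
      fun x y => rfl
    refine ⟨m, ?_, ?_, ?_⟩
    · intro x y z
      simp only [hm, lie_add, add_lie, lie_smul, smul_lie, smul_add, map_add, map_smul,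
        LinearMap.add_apply, LinearMap.smul_apply,
        smul_eq_mul, hFbr, hFa, hFb, hGa, hGb, mul_zero, zero_mul, mul_one, one_mul,
        zero_smul, smul_zero, add_zero, zero_add, KL, KL']
      module
    · intro x y z
      simp only [hm, lie_add, add_lie, lie_smul, smul_lie, smul_add, map_add, map_smul,
        LinearMap.add_apply, LinearMap.smul_apply,
        smul_eq_mul, hFbr, hFa, hFb, hGa, hGb, mul_zero, zero_mul, mul_one, one_mul,
        zero_smul, smul_zero, add_zero, zero_add, KL, KL']
      module
    · intro x y
      have hyx : ⁅y, x⁆ = -⁅x, y⁆ := neg_eq_iff_eq_neg.mp (lie_skew x y)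
      rw [hm, hm, hyx]
      match_scalars <;> field_simp <;> ring
end

section
/- Let g = (a, b, φ, Ω) be a two-step solvable Lie algebra as in the context, with dim_k a = n finite. If there exists x ∈ b such that φ(x) ∈ End(a) is nilpotent of nilpotency index n, i.e. φ(x)ⁿ = 0 and φ(x)^{n-1} ≠ 0 (so the Jordan form of φ(x) is a single full nilpotent Jordan block J(n)), then g admits a Novikov structure. -/
section core

variable {k : Type*} [Field k] [CharZero k]
  {a : Type*} [AddCommGroup a] [Module k a]
  {b : Type*} [AddCommGroup b] [Module k b]

theorem novikov_core
    (φ : b →ₗ[k] Module.End k a)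
    (hφcomm : ∀ x y : b, φ x * φ y = φ y * φ x)
    (Ω : b →ₗ[k] b →ₗ[k] a)
    (hΩskew : ∀ x y : b, Ω x y = - Ω y x)
    (hΩcoc : ∀ x y z : b, φ x (Ω y z) - φ y (Ω x z) + φ z (Ω x y) = 0)
    (y₀ : b) (R : b → Module.End k a)
    (hRadd : ∀ y z, R (y + z) = R y + R z)
    (hRsmul : ∀ (c : k) (y : b), R (c • y) = c • R y)
    (hPR : ∀ y, φ y = φ y₀ * R y)
    (hRφ : ∀ y z, R y * φ z = φ z * R y)
    (hRR : ∀ y z, R y * R z = R z * R y) :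
    ∃ mul : (a × b) →ₗ[k] (a × b) →ₗ[k] (a × b),
      (∀ u v w : a × b,
        mul u (mul v w) - mul (mul u v) w = mul v (mul u w) - mul (mul v u) w) ∧
      (∀ u v w : a × b, mul (mul u v) w = mul (mul u w) v) ∧
      (∀ u v : a × b,
        mul u v - mul v u = (φ u.2 v.1 - φ v.2 u.1 + Ω u.2 v.2, 0)) := by
  have hR0 : R 0 = 0 := by simpa using hRsmul 0 0
  set ω : b → b → a := fun y z =>
    (2 : k)⁻¹ • (Ω y z + R y (Ω y₀ z) + R z (Ω y₀ y)) with hω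
  -- bilinearity of ω
  have hωa1 : ∀ y y' z, ω (y + y') z = ω y z + ω y' z := by
    intro y y' z
    simp only [hω, map_add, LinearMap.add_apply, hRadd]
    rw [← smul_add]; congr 1; abel
  have hωs1 : ∀ (c : k) (y z : b), ω (c • y) z = c • ω y z := by
    intro c y z
    simp only [hω, map_smul, LinearMap.smul_apply, hRsmul]
    rw [smul_comm]; congr 1
    simp [smul_add]
  have hωa2 : ∀ y z z', ω y (z + z') = ω y z + ω y z' := by
    intro y z z'
    simp only [hω, map_add, LinearMap.add_apply, hRadd]
    rw [← smul_add]; congr 1; abel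
  have hωs2 : ∀ (c : k) (y z : b), ω y (c • z) = c • ω y z := by
    intro c y z
    simp only [hω, map_smul, LinearMap.smul_apply, hRsmul]
    rw [smul_comm]; congr 1
    simp [smul_add]
  have hω0l : ∀ z, ω 0 z = 0 := by
    intro z; simp [hω, hR0]
  have hω0r : ∀ y, ω y 0 = 0 := by
    intro y; simp [hω, hR0]
  -- skewness of ω recovers Ω
  have hωskew : ∀ y z, ω y z - ω z y = Ω y z := by
    intro y z
    simp only [hω]
    rw [← smul_sub]
    have h1 : (Ω y z + R y (Ω y₀ z) + R z (Ω y₀ y))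
        - (Ω z y + R z (Ω y₀ y) + R y (Ω y₀ z)) = Ω y z + Ω y z := by
      rw [hΩskew z y]; abel
    rw [h1, ← two_smul k, smul_smul, inv_mul_cancel₀ (two_ne_zero), one_smul]
  -- the key identity
  have E1 : ∀ X y : b, φ X * R y = φ y * R X := by
    intro X y
    rw [hPR X, hPR y, mul_assoc, mul_assoc, hRR]
  have key : ∀ X y z : b, φ X (ω y z) = φ y (ω X z) := by
    intro X y z
    have hT2 : φ X (R y (Ω y₀ z)) = φ y (R X (Ω y₀ z)) :=
      congrArg (fun f : Module.End k a => f (Ω y₀ z)) (E1 X y)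
    have hc : φ X (Ω y₀ y) - φ y (Ω y₀ X) = φ y₀ (Ω X y) := by
      have h0 := hΩcoc y₀ X y
      rw [eq_comm, ← sub_eq_zero, ← h0]; abel
    have hswap : ∀ (w : a) (Y : b), φ Y (R z w) = R z (φ Y w) :=
      fun w Y => (congrArg (fun f : Module.End k a => f w) (hRφ z Y)).symm
    have hT4 : φ X (R z (Ω y₀ y)) = φ y (R z (Ω y₀ X)) + φ z (Ω X y) := by
      rw [hswap, hswap]
      have h5 : φ X (Ω y₀ y) = φ y (Ω y₀ X) + φ y₀ (Ω X y) := by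
        rw [← hc]; abel
      rw [h5, map_add]
      congr 1
      have h6 : R z (φ y₀ (Ω X y)) = (R z * φ y₀) (Ω X y) := rfl
      rw [h6, hRφ z y₀]
      exact (congrArg (fun f : Module.End k a => f (Ω X y)) (hPR z)).symm
    have hT1 : φ X (Ω y z) = φ y (Ω X z) - φ z (Ω X y) := by
      have h0 := hΩcoc X y z
      rw [← sub_eq_zero, ← h0]; abel
    simp only [hω, map_smul, map_add]
    rw [hT1, hT2, hT4]
    congr 1; abel
  -- pointwise commuting of φ's
  have hend : ∀ X y : b, ∀ w : a, φ X (φ y w) = φ y (φ X w) :=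
    fun X y w => congrArg (fun f : Module.End k a => f w) (hφcomm X y)
  refine ⟨LinearMap.mk₂ k (fun u v => (φ u.2 v.1 + ω u.2 v.2, 0))
      (fun u u' v => ?_) (fun c u v => ?_) (fun u v v' => ?_) (fun u v c => ?_),
      ?_, ?_, ?_⟩
  · simp only [Prod.snd_add, Prod.fst_add, map_add, LinearMap.add_apply, hωa1,
      Prod.mk_add_mk, add_zero]
    congr 1; abel
  · simp only [Prod.smul_snd, Prod.smul_fst, map_smul, LinearMap.smul_apply, hωs1,
      Prod.smul_mk, smul_zero, smul_add]
  · simp only [Prod.snd_add, Prod.fst_add, map_add, hωa2, Prod.mk_add_mk, add_zero]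
    congr 1; abel
  · simp only [Prod.smul_snd, Prod.smul_fst, map_smul, hωs2, Prod.smul_mk, smul_zero,
      smul_add]
  · -- left symmetry
    intro u v w
    simp only [LinearMap.mk₂_apply, map_zero, LinearMap.zero_apply, hω0l, hω0r,
      add_zero, zero_add, map_add]
    rw [Prod.mk_sub_mk, Prod.mk_sub_mk, sub_zero, sub_zero]
    refine Prod.ext ?_ rfl
    simp only
    rw [hend u.2 v.2 w.1, key u.2 v.2 w.2]
    abel
  · -- right commutativity: both sides vanish
    intro u v w
    simp only [LinearMap.mk₂_apply, map_zero, LinearMap.zero_apply, hω0l, add_zero,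
      zero_add]
  · -- commutator
    intro u v
    simp only [LinearMap.mk₂_apply]
    rw [Prod.mk_sub_mk, sub_zero]
    refine Prod.ext ?_ rfl
    simp only
    rw [← hωskew u.2 v.2]
    abel

end core

/-- For a two-step solvable Lie algebra `g = (a, b, φ, Ω)` with `dim a = n`, if some
`φ(x)` is nilpotent of index exactly `n` (i.e. its Jordan form is a single full nilpotent
Jordan block `J(n)`), then `g` admits a Novikov structure. -/
theorem twoStepSolvable_full_jordan_block_novikov
    (k : Type*) [Field k] [CharZero k]
    (a : Type*) [AddCommGroup a] [Module k a] [FiniteDimensional k a]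
    (b : Type*) [AddCommGroup b] [Module k b] [FiniteDimensional k b]
    (φ : b →ₗ[k] Module.End k a)
    (hφcomm : ∀ x y : b, φ x * φ y = φ y * φ x)
    (Ω : b →ₗ[k] b →ₗ[k] a)
    (hΩskew : ∀ x y : b, Ω x y = - Ω y x)
    (hΩcoc : ∀ x y z : b, φ x (Ω y z) - φ y (Ω x z) + φ z (Ω x y) = 0)
    (x : b)
    (hxnil : φ x ^ (Module.finrank k a) = 0)
    (hxind : φ x ^ (Module.finrank k a - 1) ≠ 0) :
    ∃ mul : (a × b) →ₗ[k] (a × b) →ₗ[k] (a × b),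
      (∀ u v w : a × b,
        mul u (mul v w) - mul (mul u v) w = mul v (mul u w) - mul (mul v u) w) ∧
      (∀ u v w : a × b, mul (mul u v) w = mul (mul u w) v) ∧
      (∀ u v : a × b,
        mul u v - mul v u = (φ u.2 v.1 - φ v.2 u.1 + Ω u.2 v.2, 0)) := by
  classical
  set n := Module.finrank k a with hn
  set N := φ x with hNdef
  rcases Nat.eq_zero_or_pos n with h0 | hpos
  · exfalso
    apply hxind
    have h1 : n - 1 = 0 := by omega
    rw [h1, pow_zero]
    rw [h0, pow_zero] at hxnil
    exact hxnil
  haveI : NeZero n := ⟨by omega⟩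
  -- a cyclic vector
  obtain ⟨v, hv⟩ : ∃ v : a, (N ^ (n - 1)) v ≠ 0 := by
    by_contra h
    push_neg at h
    exact hxind (LinearMap.ext fun w => by simpa using h w)
  have hNn : N ^ n = 0 := hxnil
  have epow0 : ∀ i : ℕ, n ≤ i → N ^ i = 0 := by
    intro i hi
    rw [← Nat.sub_add_cancel hi, pow_add, hNn, mul_zero]
  -- linear independence of v, Nv, ..., N^{n-1}v
  have hli : LinearIndependent k (fun i : Fin n => (N ^ (i : ℕ)) v) := by
    rw [Fintype.linearIndependent_iff]
    intro g hg
    have main : ∀ j : Fin n, (∀ i : Fin n, (i : ℕ) < (j : ℕ) → g i = 0) → g j = 0 := by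
      intro j hsmall
      have h1 := congrArg (fun w : a => (N ^ (n - 1 - (j : ℕ))) w) hg
      simp only [map_sum, map_smul, map_zero] at h1
      rw [Finset.sum_eq_single j] at h1
      · have h2 : (N ^ (n - 1 - (j : ℕ))) ((N ^ (j : ℕ)) v) = (N ^ (n - 1)) v := by
          rw [← Module.End.mul_apply, ← pow_add]
          congr 2
          omega
        rw [h2] at h1
        rcases smul_eq_zero.mp h1 with h | h
        · exact h
        · exact absurd h hv
      · intro i _ hij
        rcases Nat.lt_or_ge (i : ℕ) (j : ℕ) with hlt | hge
        · rw [hsmall i hlt, zero_smul]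
        · have hgt : (j : ℕ) < (i : ℕ) := by
            rcases Nat.lt_or_ge (j : ℕ) (i : ℕ) with h | h
            · exact h
            · exact absurd (Fin.ext (by omega)) hij
          have h3 : (N ^ (n - 1 - (j : ℕ))) ((N ^ (i : ℕ)) v) = 0 := by
            rw [← Module.End.mul_apply, ← pow_add, epow0 _ (by omega), LinearMap.zero_apply]
          rw [h3, smul_zero]
      · intro hj
        exact absurd (Finset.mem_univ j) hj
    suffices h : ∀ m : ℕ, ∀ i : Fin n, (i : ℕ) < m → g i = 0 by
      intro i
      exact h ((i : ℕ) + 1) i (Nat.lt_succ_self _)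
    intro m
    induction m with
    | zero => intro i hi; omega
    | succ m ih =>
      intro i hi
      rcases Nat.lt_or_ge (i : ℕ) m with h | h
      · exact ih i h
      · exact main i fun i' hi' => ih i' (by omega)
  set B : Module.Basis (Fin n) k a :=
    basisOfLinearIndependentOfCardEqFinrank hli (by simp [hn]) with hBdef
  have hBe : ∀ i : Fin n, B i = (N ^ (i : ℕ)) v := fun i => by
    rw [hBdef]
    exact congrFun (coe_basisOfLinearIndependentOfCardEqFinrank _ _) i
  -- commutant of a cyclic nilpotent is polynomials in N
  have hcomm : ∀ f : Module.End k a, f * N = N * f →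
      f = ∑ i : Fin n, (B.repr (f v) i) • N ^ (i : ℕ) := by
    intro f hf
    refine B.ext fun j => ?_
    rw [hBe j]
    set c : Fin n →₀ k := B.repr (f v) with hc
    have hfv : f v = ∑ i : Fin n, c i • (N ^ (i : ℕ)) v := by
      conv_lhs => rw [← B.sum_repr (f v)]
      exact Finset.sum_congr rfl fun i _ => by rw [hBe i]
    have hfN : f ((N ^ (j : ℕ)) v) = (N ^ (j : ℕ)) (f v) := by
      have hc : Commute f N := hf
      exact congrArg (fun gg : Module.End k a => gg v) (hc.pow_right (j : ℕ))
    rw [hfN, hfv, map_sum, LinearMap.sum_apply]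
    refine Finset.sum_congr rfl fun i _ => ?_
    rw [map_smul, LinearMap.smul_apply]
    congr 1
    rw [← Module.End.mul_apply, ← Module.End.mul_apply, ← pow_add, ← pow_add, Nat.add_comm]
  have hφy : ∀ y : b, φ y = ∑ i : Fin n, (B.repr (φ y v) i) • N ^ (i : ℕ) :=
    fun y => hcomm (φ y) (hφcomm y x)
  by_cases hA : ∀ y : b, B.repr (φ y v) 0 = 0
  · -- all φ(y) have zero constant term: divide by N
    set R : b → Module.End k a :=
      fun y => ∑ i : Fin n, (B.repr (φ y v) i) • N ^ ((i : ℕ) - 1) with hR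
    refine novikov_core φ hφcomm Ω hΩskew hΩcoc x R ?_ ?_ ?_ ?_ ?_
    · intro y z
      simp only [hR, map_add, LinearMap.add_apply, Finsupp.add_apply]
      rw [← Finset.sum_add_distrib]
      exact Finset.sum_congr rfl fun i _ => by rw [add_smul]
    · intro c y
      simp only [hR, map_smul, LinearMap.smul_apply, Finsupp.smul_apply, smul_eq_mul]
      rw [Finset.smul_sum]
      exact Finset.sum_congr rfl fun i _ => by rw [smul_smul]
    · intro y
      rw [hφy y, hR, Finset.mul_sum]
      refine Finset.sum_congr rfl fun i _ => ?_
      rw [mul_smul_comm]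
      rcases Nat.eq_zero_or_pos (i : ℕ) with h | h
      · have hi0 : i = 0 := Fin.ext (by simpa using h)
        rw [hi0, hA y, zero_smul, zero_smul]
      · congr 1
        rw [← pow_succ']
        congr 1
        omega
    · intro y z
      have hNz : Commute N (φ z) := hφcomm x z
      exact (Commute.sum_left _ _ _ fun i _ => ((hNz.pow_left _)).smul_left _)
    · intro y z
      refine (Commute.sum_left _ _ _ fun i _ => ?_)
      refine (Commute.sum_right _ _ _ fun j _ => ?_)
      exact (((Commute.refl N).pow_pow _ _).smul_left _).smul_right _
  · -- some φ(y₀) is invertible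
    push_neg at hA
    obtain ⟨y₀, hy₀⟩ := hA
    set c0 : k := B.repr (φ y₀ v) 0 with hc0
    set W : Module.End k a :=
      ∑ i ∈ Finset.univ.erase (0 : Fin n), (B.repr (φ y₀ v) i) • N ^ ((i : ℕ) - 1) with hW
    have hNWsum : N * W = ∑ i ∈ Finset.univ.erase (0 : Fin n),
        (B.repr (φ y₀ v) i) • N ^ (i : ℕ) := by
      rw [hW, Finset.mul_sum]
      refine Finset.sum_congr rfl fun i hi => ?_
      rw [mul_smul_comm]
      congr 1
      have hi0 : (i : ℕ) ≠ 0 := by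
        have h := Finset.ne_of_mem_erase hi
        exact fun h' => h (Fin.ext (by simp [h']))
      rw [← pow_succ']
      congr 1
      omega
    have hsplit : φ y₀ = c0 • (1 : Module.End k a) + N * W := by
      rw [hφy y₀, hNWsum, ← Finset.add_sum_erase _
        (fun i : Fin n => (B.repr (φ y₀ v) i) • N ^ (i : ℕ)) (Finset.mem_univ (0 : Fin n))]
      congr 1
    have hNW : Commute N W := by
      rw [hW]
      refine (Commute.sum_right _ _ _ fun i _ => ?_)
      exact (((Commute.refl N).pow_right _)).smul_right _
    have hnil : IsNilpotent (N * W) := by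
      refine ⟨n, ?_⟩
      rw [hNW.mul_pow, hNn, zero_mul]
    have hu1 : IsUnit (c0 • (1 : Module.End k a)) := by
      have hmul : (c0 • (1 : Module.End k a)) * (c0⁻¹ • (1 : Module.End k a)) = 1 := by
        rw [smul_mul_assoc, one_mul, smul_smul, mul_inv_cancel₀ hy₀, one_smul]
      have hmul' : (c0⁻¹ • (1 : Module.End k a)) * (c0 • (1 : Module.End k a)) = 1 := by
        rw [smul_mul_assoc, one_mul, smul_smul, inv_mul_cancel₀ hy₀, one_smul]
      exact ⟨⟨_, _, hmul, hmul'⟩, rfl⟩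
    have hU : IsUnit (φ y₀) := by
      rw [hsplit]
      exact hnil.isUnit_add_left_of_commute hu1 ((Commute.one_right _).smul_right _)
    set u := hU.unit with hu
    have huv : (u : Module.End k a) = φ y₀ := hU.unit_spec
    set R : b → Module.End k a := fun y => (↑u⁻¹ : Module.End k a) * φ y with hR
    have hinv : ∀ z : b, Commute (φ z) (↑u⁻¹ : Module.End k a) := by
      intro z
      have h : Commute (φ z) (u : Module.End k a) := by
        rw [huv]; exact hφcomm z y₀
      exact h.units_inv_right
    refine novikov_core φ hφcomm Ω hΩskew hΩcoc y₀ R ?_ ?_ ?_ ?_ ?_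
    · intro y z
      simp only [hR, map_add, mul_add]
    · intro c y
      simp only [hR, map_smul, mul_smul_comm]
    · intro y
      rw [hR, ← mul_assoc, ← huv, Units.mul_inv, one_mul]
    · intro y z
      exact (((hinv z).symm.mul_left (hφcomm y z)))
    · intro y z
      have h1 : Commute (↑u⁻¹ : Module.End k a) ((↑u⁻¹ : Module.End k a) * φ z) :=
        (Commute.refl _).mul_right (hinv z).symm
      have h2 : Commute (φ y) ((↑u⁻¹ : Module.End k a) * φ z) :=
        ((hinv y).mul_right (hφcomm y z))
      exact h1.mul_left h2
end

section
/- Let g be a finite-dimensional nilpotent Lie algebra over a field k of characteristic zero, equipped with a representation φ : g → gl(n,k). Consider the g-module structure on column vectors k^{n×1} given by X·v = φ(X)v and the g-module structure on row vectors k^{1×n} given by X·w = −w φ(X). Then the space of invariants {v ∈ k^{n×1} : φ(X)v = 0 for all X ∈ g} is zero if and only if the space of invariants {w ∈ k^{1×n} : w φ(X) = 0 for all X ∈ g} is zero. -/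
open Matrix

open LieModule in
/-- For a finite-dimensional module `M` over a nilpotent Lie algebra `g`, the invariants of
`M` vanish iff `⁅g, M⁆ = M`, by the Fitting decomposition and Engel's theorem. -/
private lemma invariants_eq_bot_iff_lcs_top
    (k : Type*) [Field k]
    (g : Type*) [LieRing g] [LieAlgebra k g] [LieRing.IsNilpotent g]
    (M : Type*) [AddCommGroup M] [Module k M] [LieRingModule g M] [LieModule k g M]
    [FiniteDimensional k M] :
    (∀ m : M, (∀ X : g, ⁅X, m⁆ = 0) → m = 0) ↔
      lowerCentralSeries k g M 1 = ⊤ := by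
  constructor
  · intro h
    have hw : genWeightSpace M (0 : g → k) = ⊥ := by
      by_contra hne
      haveI hnt : Nontrivial (genWeightSpace M (0 : g → k)) :=
        (LieSubmodule.nontrivial_iff_ne_bot k g M).mpr hne
      haveI := nontrivial_max_triv_of_isNilpotent k g (genWeightSpace M (0 : g → k))
      obtain ⟨t, ht⟩ := exists_ne (0 : maxTrivSubmodule k g (genWeightSpace M (0 : g → k)))
      have htval : ∀ X : g, ⁅X, (t : genWeightSpace M (0 : g → k))⁆ = 0 := t.2
      have hzero : ((t : genWeightSpace M (0 : g → k)) : M) = 0 := by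
        apply h
        intro X
        have : (↑(⁅X, (t : genWeightSpace M (0 : g → k))⁆) : M) = ⁅X, ((t : genWeightSpace M (0 : g → k)) : M)⁆ := rfl
        rw [← this, htval X]
        rfl
      apply ht
      ext
      exact hzero
    have h2 := (isCompl_genWeightSpace_zero_posFittingComp k g M).codisjoint
    rw [codisjoint_iff, hw, bot_sup_eq] at h2
    have h3 : (⊤ : LieSubmodule k g M) ≤ lowerCentralSeries k g M 1 := by
      rw [← h2]
      exact le_trans (posFittingComp_le_iInf_lowerCentralSeries k g M) (iInf_le _ 1)
    exact le_antisymm le_top h3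
  · intro h m hm
    have hall : ∀ j, lowerCentralSeries k g M j = ⊤ := by
      intro j
      induction j with
      | zero => rfl
      | succ j ih =>
        rw [LieModule.lowerCentralSeries_succ, ih]
        rw [LieModule.lowerCentralSeries_succ, LieModule.lowerCentralSeries_zero] at h
        exact h
    have hfit : posFittingComp k g M = ⊤ := by
      rw [← iInf_lowerCentralSeries_eq_posFittingComp]
      simp [hall]
    have hw : genWeightSpace M (0 : g → k) = ⊥ := by
      have hd := (isCompl_genWeightSpace_zero_posFittingComp k g M).disjoint
      rw [hfit, disjoint_top] at hd
      exact hd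
    have hmem : m ∈ genWeightSpace M (0 : g → k) := by
      rw [mem_genWeightSpace]
      intro x
      refine ⟨1, ?_⟩
      simp [toEnd_apply_apply, hm x]
    rw [hw] at hmem
    simpa using hmem

/-- For a finite-dimensional nilpotent Lie algebra `g` with a matrix representation
`φ : g → gl(n,k)`, the invariants of the column-vector module (`X·v = φ(X)v`) vanish if
and only if the invariants of the row-vector module (`X·w = −w φ(X)`) vanish. -/
theorem nilpotent_column_row_invariants
    (k : Type*) [Field k] [CharZero k]
    (g : Type*) [LieRing g] [LieAlgebra k g] [FiniteDimensional k g]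
    [LieRing.IsNilpotent g]
    (n : ℕ) (φ : g →ₗ[k] Matrix (Fin n) (Fin n) k)
    (hφ : ∀ X Y : g, φ ⁅X, Y⁆ = φ X * φ Y - φ Y * φ X) :
    (∀ v : Fin n → k, (∀ X : g, φ X *ᵥ v = 0) → v = 0) ↔
    (∀ w : Fin n → k, (∀ X : g, w ᵥ* φ X = 0) → w = 0) := by
  letI : LieRingModule g (Fin n → k) :=
    { bracket := fun X v => φ X *ᵥ v
      add_lie := fun X Y v => by simp [Matrix.add_mulVec]
      lie_add := fun X v w => by simp [Matrix.mulVec_add]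
      leibniz_lie := fun X Y v => by
        show φ X *ᵥ (φ Y *ᵥ v) = φ ⁅X, Y⁆ *ᵥ v + φ Y *ᵥ (φ X *ᵥ v)
        rw [hφ, Matrix.sub_mulVec, Matrix.mulVec_mulVec, Matrix.mulVec_mulVec]
        abel }
  letI : LieModule k g (Fin n → k) :=
    { smul_lie := fun t X v => by
        show φ (t • X) *ᵥ v = t • (φ X *ᵥ v)
        rw [LinearMap.map_smul, Matrix.smul_mulVec]
      lie_smul := fun t X v => by
        show φ X *ᵥ (t • v) = t • (φ X *ᵥ v)
        rw [Matrix.mulVec_smul] }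
  have key : (∀ v : Fin n → k, (∀ X : g, φ X *ᵥ v = 0) → v = 0) ↔
      LieModule.lowerCentralSeries k g (Fin n → k) 1 = ⊤ :=
    invariants_eq_bot_iff_lcs_top k g (Fin n → k)
  -- The first lower central series term, as a plain submodule, is the span of all `φ X *ᵥ v`.
  have hS : ((LieModule.lowerCentralSeries k g (Fin n → k) 1 : LieSubmodule k g (Fin n → k)) :
      Submodule k (Fin n → k)) =
      Submodule.span k {u : Fin n → k | ∃ X : g, ∃ v : Fin n → k, φ X *ᵥ v = u} := by
    rw [LieModule.lowerCentralSeries_succ, LieModule.lowerCentralSeries_zero,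
      LieSubmodule.lieIdeal_oper_eq_linear_span']
    congr 1
    ext u
    constructor
    · rintro ⟨x, -, v, -, rfl⟩; exact ⟨x, v, rfl⟩
    · rintro ⟨x, v, rfl⟩; exact ⟨x, trivial, v, trivial, rfl⟩
  have hf_eq : ∀ (f : Module.Dual k (Fin n → k)) (u : Fin n → k),
      f u = ∑ i, u i * f (Pi.single i 1) := by
    intro f u
    have hu : u = ∑ i, u i • (Pi.single i 1 : Fin n → k) := by
      ext j
      simp [Pi.single_apply, Finset.sum_apply]
    conv_lhs => rw [hu]
    simp [mul_comm]
  rw [key]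
  constructor
  · -- LCS₁ = ⊤ → row invariants vanish
    intro htop w hw
    have hperp : ∀ u : Fin n → k, w ⬝ᵥ u = 0 := by
      intro u
      have hu : u ∈ Submodule.span k {u : Fin n → k | ∃ X : g, ∃ v : Fin n → k, φ X *ᵥ v = u} := by
        rw [← hS, htop]
        trivial
      induction hu using Submodule.span_induction with
      | mem u hu =>
        obtain ⟨X, v, rfl⟩ := hu
        rw [Matrix.dotProduct_mulVec, hw X, zero_dotProduct]
      | zero => simp
      | add x y _ _ hx hy => rw [dotProduct_add, hx, hy, add_zero]
      | smul t x _ hx => rw [dotProduct_smul, hx, smul_zero]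
    funext i
    have := hperp (Pi.single i 1)
    simpa using this
  · -- row invariants vanish → LCS₁ = ⊤
    intro hrow
    rw [← LieSubmodule.toSubmodule_eq_top, hS]
    by_contra hne
    obtain ⟨f, hf0, hfbot⟩ :=
      Submodule.exists_dual_map_eq_bot_of_lt_top (lt_top_iff_ne_top.mpr hne) inferInstance
    set w : Fin n → k := fun i => f (Pi.single i 1) with hw_def
    have hfS : ∀ u ∈ Submodule.span k
        {u : Fin n → k | ∃ X : g, ∃ v : Fin n → k, φ X *ᵥ v = u}, f u = 0 := by
      intro u hu
      have : f u ∈ (⊥ : Submodule k k) := by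
        rw [← hfbot]
        exact Submodule.mem_map_of_mem hu
      simpa using this
    have hwrow : ∀ X : g, w ᵥ* φ X = 0 := by
      intro X
      funext j
      have hgen : f (φ X *ᵥ Pi.single j 1) = 0 :=
        hfS _ (Submodule.subset_span ⟨X, Pi.single j 1, rfl⟩)
      rw [hf_eq f (φ X *ᵥ Pi.single j 1)] at hgen
      have : (w ᵥ* φ X) j = ∑ i, (φ X *ᵥ Pi.single j 1) i * f (Pi.single i 1) := by
        simp only [Matrix.vecMul, Matrix.mulVec, dotProduct]
        refine Finset.sum_congr rfl fun i _ => ?_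
        simp [Pi.single_apply, mul_comm, hw_def]
      rw [this, hgen]
      rfl
    have hw0 : w = 0 := hrow w hwrow
    refine hf0 (LinearMap.ext fun u => ?_)
    rw [hf_eq f u]
    have hz : ∀ i, f (Pi.single i 1) = 0 := fun i => congrFun hw0 i
    simp [hz]
end

section
/- Let g be a finite-dimensional two-step solvable Lie algebra over a field k of characteristic zero (i.e. [[g,g],[g,g]] = 0) whose lower central series g¹ = g, g^{i+1} = [g, g^i] satisfies g^r = g⁴ for all r ≥ 5. Then g admits a complete left-symmetric structure: there exists a bilinear product · on g with x·(y·z) − (x·y)·z = y·(x·z) − (y·x)·z and x·y − y·x = [x,y] for all x,y,z ∈ g, such that for every x ∈ g the right multiplication operator R(x) : y ↦ y·x is a nilpotent endomorphism of g. -/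
set_option maxHeartbeats 2000000
set_option synthInstance.maxHeartbeats 1000000
set_option maxRecDepth 4000

attribute [local instance 100] LieRing.ofAssociativeRing

/-- Generalization of Scheuneman's theorem: a finite-dimensional two-step solvable Lie
algebra whose lower central series stabilizes at `g⁴` (i.e. `gʳ = g⁴` for all `r ≥ 5`;
in Mathlib's indexing `lowerCentralSeries m = lowerCentralSeries 3` for all `m ≥ 4`)
admits a complete left-symmetric structure. -/
theorem twoStepSolvable_lcs_stable_complete_lsa
    (k : Type*) [Field k] [CharZero k]
    (g : Type*) [LieRing g] [LieAlgebra k g] [FiniteDimensional k g]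
    (hsolv : ∀ x y z w : g, ⁅⁅x, y⁆, ⁅z, w⁆⁆ = 0)
    (hlcs : ∀ m : ℕ, 4 ≤ m →
      LieModule.lowerCentralSeries k g g m = LieModule.lowerCentralSeries k g g 3) :
    ∃ mul : g →ₗ[k] g →ₗ[k] g,
      (∀ x y z : g,
        mul x (mul y z) - mul (mul x y) z = mul y (mul x z) - mul (mul y x) z) ∧
      (∀ x y : g, mul x y - mul y x = ⁅x, y⁆) ∧
      (∀ x : g, IsNilpotent (LinearMap.flip mul x)) := by
  classical
  set A : LieSubmodule k g g := LieModule.lowerCentralSeries k g g 1 with hAdef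
  set B : LieSubmodule k g g := LieModule.lowerCentralSeries k g g 3 with hBdef
  -- basic membership facts
  have hbr : ∀ x y : g, ⁅x, y⁆ ∈ A := by
    intro x y
    rw [hAdef, LieModule.lowerCentralSeries_succ, LieModule.lowerCentralSeries_zero]
    exact LieSubmodule.lie_mem_lie (LieSubmodule.mem_top x) (LieSubmodule.mem_top y)
  have hBA : ∀ z : g, z ∈ B → z ∈ A := by
    intro z hz
    rw [hAdef]; rw [hBdef] at hz
    exact LieModule.antitone_lowerCentralSeries k g g (by norm_num : (1:ℕ) ≤ 3) hz
  have hmem3 : ∀ x y u : g, u ∈ A → ⁅x, ⁅y, u⁆⁆ ∈ B := by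
    intro x y u hu
    rw [hAdef] at hu
    have h2 : ⁅y, u⁆ ∈ LieModule.lowerCentralSeries k g g 2 := by
      rw [LieModule.lowerCentralSeries_succ]
      exact LieSubmodule.lie_mem_lie (LieSubmodule.mem_top y) hu
    rw [hBdef]
    rw [show (3:ℕ) = 2 + 1 from rfl, LieModule.lowerCentralSeries_succ]
    exact LieSubmodule.lie_mem_lie (LieSubmodule.mem_top x) h2
  -- abelian-ness of A
  have hAspan : ((A : LieSubmodule k g g) : Submodule k g)
      = Submodule.span k {m : g | ∃ x ∈ (⊤ : LieIdeal k g), ∃ n ∈ (⊤ : LieSubmodule k g g), ⁅x, n⁆ = m} := by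
    rw [hAdef, LieModule.lowerCentralSeries_succ, LieModule.lowerCentralSeries_zero]
    exact LieSubmodule.lieIdeal_oper_eq_linear_span' (R := k) (L := g) (M := g) (I := ⊤) (N := ⊤)
  have habel : ∀ x y : g, x ∈ A → y ∈ A → ⁅x, y⁆ = 0 := by
    have h1 : ∀ u : g, u ∈ A → ∀ z w : g, ⁅u, ⁅z, w⁆⁆ = 0 := by
      intro u hu z w
      have hu' : u ∈ Submodule.span k {m : g | ∃ x ∈ (⊤ : LieIdeal k g), ∃ n ∈ (⊤ : LieSubmodule k g g), ⁅x, n⁆ = m} := by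
        rw [← hAspan]; exact (LieSubmodule.mem_toSubmodule _).mpr hu
      refine Submodule.span_induction ?_ ?_ ?_ ?_ hu'
      · rintro m ⟨a, -, b, -, rfl⟩; exact hsolv a b z w
      · simp
      · intro a b _ _ ha hb; rw [add_lie, ha, hb, add_zero]
      · intro t a _ ha; rw [smul_lie, ha, smul_zero]
    intro x y hx hy
    have hy' : y ∈ Submodule.span k {m : g | ∃ a ∈ (⊤ : LieIdeal k g), ∃ n ∈ (⊤ : LieSubmodule k g g), ⁅a, n⁆ = m} := by
      rw [← hAspan]; exact (LieSubmodule.mem_toSubmodule _).mpr hy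
    refine Submodule.span_induction ?_ ?_ ?_ ?_ hy'
    · rintro m ⟨a, -, b, -, rfl⟩; exact h1 x hx a b
    · simp
    · intro a b _ _ ha hb; rw [lie_add, ha, hb, add_zero]
    · intro t a _ ha; rw [lie_smul, ha, smul_zero]
  -- the projection onto A
  obtain ⟨Cc, hCc⟩ := Submodule.exists_isCompl ((A : LieSubmodule k g g) : Submodule k g)
  obtain ⟨rpr, hrpr⟩ : ∃ r : g →ₗ[k] ↥A, ∀ (x : g) (hx : x ∈ A), r x = ⟨x, hx⟩ := by
    refine ⟨Submodule.linearProjOfIsCompl _ Cc hCc, ?_⟩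
    intro x hx
    exact Submodule.linearProjOfIsCompl_apply_left hCc ⟨x, hx⟩
  set jmap : ↥A →ₗ[k] g := ((A : LieSubmodule k g g) : Submodule k g).subtype with hjmap
  have hj : ∀ u : ↥A, jmap u = (u : g) := fun _ => rfl
  have hjr : ∀ u : ↥A, rpr (u : g) = u := by
    intro u
    rw [hrpr (u : g) u.2]
  have hrprcoe : ∀ (x : g), x ∈ A → ((rpr x : ↥A) : g) = x := by
    intro x hx; rw [hrpr x hx]
  set qe : g →ₗ[k] g := LinearMap.id - jmap ∘ₗ rpr with hqe
  have hqe_apply : ∀ x : g, qe x = x - ((rpr x : ↥A) : g) := fun _ => rfl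
  have hqu : ∀ u : ↥A, qe (u : g) = 0 := by
    intro u
    rw [hqe_apply, hjr, sub_self]
  have hq0 : ∀ x : g, x ∈ A → qe x = 0 := fun x hx => hqu ⟨x, hx⟩
  -- ρ
  set ρb : g →ₗ[k] Module.End k ↥A := (LieModule.toEnd k g ↥A).toLinearMap with hρbdef
  have hρ : ∀ (x : g) (u : ↥A), ((ρb x u : ↥A) : g) = ⁅x, (u : g)⁆ := by
    intro x u
    rw [hρbdef]
    simp [LieModule.toEnd_apply_apply]
  have hρ0 : ∀ (u v : ↥A), ρb (u : g) v = 0 := by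
    intro u v
    apply Subtype.ext
    rw [hρ]
    exact habel _ _ u.2 v.2
  have hρρcomm : ∀ (x y : g) (v : ↥A), ρb x (ρb y v) = ρb y (ρb x v) := by
    intro x y v
    apply Subtype.ext
    rw [hρ, hρ, hρ, hρ]
    have := leibniz_lie x y (v : g)
    have h0 : ⁅⁅x, y⁆, (v : g)⁆ = 0 := habel _ _ (hbr x y) v.2
    rw [h0] at this
    simpa using this
  have hρρB : ∀ (x y : g) (v : ↥A), ((ρb x (ρb y v) : ↥A) : g) ∈ B := by
    intro x y v
    rw [hρ, hρ]
    exact hmem3 x y _ v.2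
  -- c
  set cb : g →ₗ[k] g →ₗ[k] ↥A :=
    ((((LieModule.toEnd k g g).toLinearMap ∘ₗ qe).compl₂ qe).compr₂ rpr) with hcbdef
  have hcb : ∀ x y : g, ((cb x y : ↥A) : g) = ⁅qe x, qe y⁆ := by
    intro x y
    rw [hcbdef]
    simp only [LinearMap.compr₂_apply, LinearMap.compl₂_apply, LinearMap.comp_apply]
    rw [LieHom.coe_toLinearMap, LieModule.toEnd_apply_apply]
    exact hrprcoe _ (hbr _ _)
  have hcbu : ∀ (x : g) (u : ↥A), cb x (u : g) = 0 := by
    intro x u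
    apply Subtype.ext
    rw [hcb, hqu]
    simp
  have hcub : ∀ (u : ↥A) (x : g), cb (u : g) x = 0 := by
    intro u x
    apply Subtype.ext
    rw [hcb, hqu]
    simp
  have hskew : ∀ x y : g, cb x y = - cb y x := by
    intro x y
    rw [eq_neg_iff_add_eq_zero]
    apply Subtype.ext
    have : ((cb x y + cb y x : ↥A) : g) = ((cb x y : ↥A) : g) + ((cb y x : ↥A) : g) := rfl
    rw [this, hcb, hcb, ← lie_skew (qe x) (qe y), neg_add_cancel]
    rfl
  have hlieq : ∀ (x w : g), w ∈ A → ⁅x, w⁆ = ⁅qe x, w⁆ := by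
    intro x w hw
    have : ⁅x, w⁆ - ⁅qe x, w⁆ = ⁅x - qe x, w⁆ := by rw [sub_lie]
    have h2 : x - qe x = ((rpr x : ↥A) : g) := by rw [hqe_apply]; abel
    rw [h2] at this
    have h3 : ⁅((rpr x : ↥A) : g), w⁆ = 0 := habel _ _ (rpr x).2 hw
    rw [h3] at this
    exact sub_eq_zero.mp this
  have hcoc : ∀ x y z : g, ρb x (cb y z) + ρb y (cb z x) + ρb z (cb x y) = 0 := by
    intro x y z
    apply Subtype.ext
    have hadd : ∀ a b : ↥A, ((a + b : ↥A) : g) = (a : g) + (b : g) := fun _ _ => rfl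
    rw [hadd, hadd, hρ, hρ, hρ, hcb, hcb, hcb,
      hlieq x _ (hbr _ _), hlieq y _ (hbr _ _), hlieq z _ (hbr _ _), lie_jacobi]
    rfl
  -- the commutative algebra S
  set ρSet : Set (Module.End k ↥A) := Set.range (fun x : g => ρb x) with hρSet
  set S : Subalgebra k (Module.End k ↥A) := Algebra.adjoin k ρSet with hS
  have hρmem : ∀ x : g, ρb x ∈ S := fun x => Algebra.subset_adjoin ⟨x, rfl⟩
  have hgencomm : ∀ f ∈ ρSet, ∀ f' ∈ ρSet, f * f' = f' * f := by
    rintro f ⟨x, rfl⟩ f' ⟨y, rfl⟩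
    apply LinearMap.ext
    intro v
    show ρb x (ρb y v) = ρb y (ρb x v)
    exact hρρcomm x y v
  have Hcomm : ∀ s ∈ S, ∀ t ∈ S, s * t = t * s := by
    intro s hs
    refine Algebra.adjoin_induction ?_ ?_ ?_ ?_ hs
    · intro f hf t ht
      refine Algebra.adjoin_induction ?_ ?_ ?_ ?_ ht
      · intro f' hf'; exact hgencomm f hf f' hf'
      · intro r; exact (Algebra.commutes r f).symm
      · intro a b _ _ ha hb; rw [mul_add, add_mul, ha, hb]
      · intro a b _ _ ha hb; rw [← mul_assoc, ha, mul_assoc, hb, mul_assoc]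
    · intro r t _; exact Algebra.commutes r t
    · intro a b _ _ ha hb t ht; rw [add_mul, mul_add, ha t ht, hb t ht]
    · intro a b _ _ ha hb t ht
      rw [mul_assoc, hb t ht, ← mul_assoc, ha t ht, mul_assoc]
  letI : CommRing ↥S := { (inferInstance : Ring ↥S) with
    mul_comm := fun a b => Subtype.ext (Hcomm a.1 a.2 b.1 b.2) }
  letI : Module ↥S ↥A := Module.compHom ↥A (S.val.toRingHom)
  have hsmulS : ∀ (s : ↥S) (v : ↥A), s • v = (s : Module.End k ↥A) v := fun _ _ => rfl
  have hksmul : ∀ (r : k) (v : ↥A), (algebraMap k ↥S r) • v = r • v := by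
    intro r v
    rw [hsmulS]
    have h1 : ((algebraMap k ↥S r : ↥S) : Module.End k ↥A) = algebraMap k (Module.End k ↥A) r := by
      simp
    rw [h1, Module.algebraMap_end_apply]
  have hinv : ∀ (N' : LieSubmodule k g g), ∀ s ∈ S, ∀ v : ↥A,
      (v : g) ∈ N' → (((s : Module.End k ↥A) v : ↥A) : g) ∈ N' := by
    intro N' s hs
    refine Algebra.adjoin_induction ?_ ?_ ?_ ?_ hs
    · rintro f ⟨x, rfl⟩ v hv
      show ((ρb x v : ↥A) : g) ∈ N'
      rw [hρ]
      exact N'.lie_mem hv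
    · intro r v hv
      rw [Module.algebraMap_end_apply]
      show ((r • v : ↥A) : g) ∈ N'
      have h1 : ((r • v : ↥A) : g) = r • (v : g) := rfl
      rw [h1]
      exact N'.smul_mem r hv
    · intro a b _ _ ha hb v hv
      have h1 : (a + b) v = a v + b v := rfl
      rw [h1]
      have h2 : ((a v + b v : ↥A) : g) = ((a v : ↥A) : g) + ((b v : ↥A) : g) := rfl
      rw [h2]
      exact N'.add_mem (ha v hv) (hb v hv)
    · intro a b _ _ ha hb v hv
      have h1 : (a * b) v = a (b v) := rfl
      rw [h1]
      exact ha _ (hb v hv)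
  -- B inside ↥A
  set Bk : Submodule k ↥A :=
    { carrier := {v : ↥A | (v : g) ∈ B}
      add_mem' := fun {a b} ha hb => by
        show ((a + b : ↥A) : g) ∈ B
        have h1 : ((a + b : ↥A) : g) = (a : g) + (b : g) := rfl
        rw [h1]; exact B.add_mem ha hb
      zero_mem' := by
        show ((0 : ↥A) : g) ∈ B
        have h1 : ((0 : ↥A) : g) = 0 := rfl
        rw [h1]; exact B.zero_mem
      smul_mem' := fun r a ha => by
        show ((r • a : ↥A) : g) ∈ B
        have h1 : ((r • a : ↥A) : g) = r • (a : g) := rfl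
        rw [h1]; exact B.smul_mem r ha } with hBk
  set NB : Submodule ↥S ↥A :=
    { carrier := {v : ↥A | (v : g) ∈ B}
      add_mem' := fun {a b} ha hb => by
        show ((a + b : ↥A) : g) ∈ B
        have h1 : ((a + b : ↥A) : g) = (a : g) + (b : g) := rfl
        rw [h1]; exact B.add_mem ha hb
      zero_mem' := by
        show ((0 : ↥A) : g) ∈ B
        have h1 : ((0 : ↥A) : g) = 0 := rfl
        rw [h1]; exact B.zero_mem
      smul_mem' := fun s v hv => by
        show (((s • v : ↥A)) : g) ∈ B
        rw [hsmulS]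
        exact hinv B s.1 s.2 v hv } with hNB
  have hNBfg : NB.FG := by
    obtain ⟨sfin, hsfin⟩ := IsNoetherian.noetherian Bk
    refine ⟨sfin, le_antisymm ?_ ?_⟩
    · rw [Submodule.span_le]
      intro m hm
      have h1 : m ∈ Submodule.span k (sfin : Set ↥A) := Submodule.subset_span hm
      rw [hsfin] at h1
      exact h1
    · intro m hm
      have hm' : m ∈ Submodule.span k (sfin : Set ↥A) := by rw [hsfin]; exact hm
      refine Submodule.span_induction ?_ ?_ ?_ ?_ hm'
      · exact fun x hx => Submodule.subset_span hx
      · exact Submodule.zero_mem _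
      · exact fun a b _ _ ha hb => Submodule.add_mem _ ha hb
      · intro r a _ ha
        rw [← hksmul]
        exact Submodule.smul_mem _ _ ha
  set ρsub : g → ↥S := fun x => ⟨ρb x, hρmem x⟩ with hρsub
  set ISp : Ideal ↥S := Ideal.span (Set.range ρsub) with hISp
  -- stability : B ≤ ISp • NB
  have hBop : B = ⁅(⊤ : LieIdeal k g), B⁆ := by
    rw [hBdef, ← LieModule.lowerCentralSeries_succ]
    exact (hlcs 4 (by norm_num)).symm
  have hBspan : ((B : LieSubmodule k g g) : Submodule k g)
      = Submodule.span k {m : g | ∃ x ∈ (⊤ : LieIdeal k g), ∃ nn ∈ B, ⁅x, nn⁆ = m} := by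
    conv_lhs => rw [hBop]
    exact LieSubmodule.lieIdeal_oper_eq_linear_span' (R := k) (L := g) (M := g) (I := ⊤) (N := B)
  have hle : NB ≤ ISp • NB := by
    intro v hv
    have hv' : (v : g) ∈ Submodule.span k {m : g | ∃ x ∈ (⊤ : LieIdeal k g), ∃ nn ∈ B, ⁅x, nn⁆ = m} := by
      rw [← hBspan]
      exact (LieSubmodule.mem_toSubmodule _).mpr hv
    have hsetA : {m : g | ∃ x ∈ (⊤ : LieIdeal k g), ∃ nn ∈ B, ⁅x, nn⁆ = m}
        ⊆ ((A : LieSubmodule k g g) : Submodule k g) := by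
      rintro m ⟨x, -, nn, hnn, rfl⟩
      exact (LieSubmodule.mem_toSubmodule _).mpr (hbr x nn)
    have hspanA : ∀ {m : g},
        m ∈ Submodule.span k {m : g | ∃ x ∈ (⊤ : LieIdeal k g), ∃ nn ∈ B, ⁅x, nn⁆ = m} → m ∈ A :=
      fun hm => (LieSubmodule.mem_toSubmodule _).mp (Submodule.span_le.mpr hsetA hm)
    have key : ∀ (m : g) (hm : m ∈ Submodule.span k {m : g | ∃ x ∈ (⊤ : LieIdeal k g), ∃ nn ∈ B, ⁅x, nn⁆ = m}),
        (⟨m, hspanA hm⟩ : ↥A) ∈ ISp • NB := by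
      intro m hm
      have hmemcast : ∀ (u u' : ↥A), u = u' → u' ∈ ISp • NB → u ∈ ISp • NB :=
        fun u u' h hm' => by rw [h]; exact hm'
      refine Submodule.span_induction
        (p := fun m hm => (⟨m, hspanA hm⟩ : ↥A) ∈ ISp • NB) ?_ ?_ ?_ ?_ hm
      · intro m' hm'
        obtain ⟨x, -, nn, hnn, rfl⟩ := hm'
        have hnnA : nn ∈ A := hBA nn hnn
        have heq : (⟨⁅x, nn⁆, hspanA (Submodule.subset_span ⟨x, trivial, nn, hnn, rfl⟩)⟩ : ↥A)
            = ρsub x • (⟨nn, hnnA⟩ : ↥A) := by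
          apply Subtype.ext
          rw [hsmulS]
          show ⁅x, nn⁆ = ((ρb x (⟨nn, hnnA⟩ : ↥A) : ↥A) : g)
          rw [hρ]
        rw [heq]
        exact @Submodule.smul_mem_smul ↥S _ ↥S _ _ ↥A _ _ _ ⟨fun _ _ _ => rfl⟩ _ _ _ _ (Submodule.subset_span ⟨x, rfl⟩) hnn
      · exact hmemcast _ 0 (Subtype.ext rfl) (Submodule.zero_mem (ISp • NB))
      · intro a b ha hb hpa hpb
        exact hmemcast _ ((⟨a, hspanA ha⟩ : ↥A) + (⟨b, hspanA hb⟩ : ↥A)) (Subtype.ext rfl)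
          (Submodule.add_mem _ hpa hpb)
      · intro r a ha hpa
        exact hmemcast _ ((algebraMap k ↥S r) • (⟨a, hspanA ha⟩ : ↥A))
          ((Subtype.ext rfl : (⟨r • a, hspanA (Submodule.smul_mem _ r ha)⟩ : ↥A)
              = r • (⟨a, hspanA ha⟩ : ↥A)).trans (hksmul r _).symm)
          (Submodule.smul_mem _ _ hpa)
    have h2 := key (v : g) hv'
    have h3 : (⟨(v : g), hspanA hv'⟩ : ↥A) = v := Subtype.ext rfl
    rw [h3] at h2
    exact h2
  -- Nakayama
  obtain ⟨rr, hrr1, hrr0⟩ :=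
    Submodule.exists_sub_one_mem_and_smul_eq_zero_of_fg_of_le_smul ISp NB hNBfg hle
  set P0 : ↥S := 1 - rr with hP0def
  have hP0I : P0 ∈ ISp := by
    have h1 := ISp.neg_mem hrr1
    simpa [hP0def] using h1
  have hP0id : ∀ v : ↥A, (v : g) ∈ B → (P0 : Module.End k ↥A) v = v := by
    intro v hv
    have h0 : rr • v = 0 := hrr0 v hv
    have h2 : P0 • v = v := by
      rw [hsmulS, hP0def]; show v - (rr : Module.End k ↥A) v = v; rw [← hsmulS, h0, sub_zero]
    rw [hsmulS] at h2
    exact h2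
  obtain ⟨n, fc, gc, hsum⟩ := Submodule.mem_span_set'.mp (hP0I : P0 ∈ Submodule.span ↥S (Set.range ρsub))
  have hrep : ∀ i : Fin n, ∃ x : g, ρsub x = (gc i : ↥S) := fun i => (gc i).2
  choose w hw using hrep
  have hP0eq : P0 = ∑ i, fc i * ρsub (w i) := by
    rw [← hsum]
    exact Finset.sum_congr rfl (fun i _ => by rw [smul_eq_mul, hw])
  -- π and κ
  set πe : Module.End k ↥A := ((P0 * P0 : ↥S) : Module.End k ↥A) with hπedef
  set κe : Module.End k ↥A := 1 - πe with hκedef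
  have hκapp : ∀ v : ↥A, κe v = v - πe v := fun _ => rfl
  have hSmulapp : ∀ (s t : ↥S) (v : ↥A),
      ((s * t : ↥S) : Module.End k ↥A) v = (s : Module.End k ↥A) ((t : Module.End k ↥A) v) :=
    fun _ _ _ => rfl
  have hcommSρ : ∀ (s : ↥S) (x : g) (v : ↥A),
      (s : Module.End k ↥A) (ρb x v) = ρb x ((s : Module.End k ↥A) v) := by
    intro s x v
    have h := Hcomm s.1 s.2 (ρb x) (hρmem x)
    have h2 := DFunLike.congr_fun h v
    exact h2
  have hρπ : ∀ (x : g) (v : ↥A), πe (ρb x v) = ρb x (πe v) := by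
    intro x v
    rw [hπedef]
    exact hcommSρ (P0 * P0) x v
  have hρκ : ∀ (x : g) (v : ↥A), κe (ρb x v) = ρb x (κe v) := by
    intro x v
    rw [hκapp, hκapp, hρπ, map_sub]
  have hπP0 : ∀ v : ↥A, πe v = (P0 : Module.End k ↥A) ((P0 : Module.End k ↥A) v) :=
    fun v => hSmulapp P0 P0 v
  -- membership raising along the ideal
  have hIstep : ∀ s ∈ ISp, ∀ (N' : LieSubmodule k g g), ∀ v : ↥A,
      (v : g) ∈ N' → (((s : Module.End k ↥A) v : ↥A) : g) ∈ ⁅(⊤ : LieIdeal k g), N'⁆ := by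
    intro s hs
    refine Submodule.span_induction ?_ ?_ ?_ ?_
      (hs : s ∈ Submodule.span ↥S (Set.range ρsub))
    · rintro f ⟨x, rfl⟩ N' v hv
      show ((ρb x v : ↥A) : g) ∈ _
      rw [hρ]
      exact LieSubmodule.lie_mem_lie (LieSubmodule.mem_top x) hv
    · intro N' v _
      show (((0 : Module.End k ↥A) v : ↥A) : g) ∈ _
      have h1 : (0 : Module.End k ↥A) v = 0 := rfl
      rw [h1]
      have h2 : ((0 : ↥A) : g) = 0 := rfl
      rw [h2]
      exact LieSubmodule.zero_mem _
    · intro a b _ _ ha hb N' v hv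
      show ((((a + b : ↥S) : Module.End k ↥A) v : ↥A) : g) ∈ _
      have h1 : ((a + b : ↥S) : Module.End k ↥A) v
          = (a : Module.End k ↥A) v + (b : Module.End k ↥A) v := rfl
      rw [h1]
      have h2 : ((((a : Module.End k ↥A) v + (b : Module.End k ↥A) v) : ↥A) : g)
          = (((a : Module.End k ↥A) v : ↥A) : g) + (((b : Module.End k ↥A) v : ↥A) : g) := rfl
      rw [h2]
      exact add_mem (ha N' v hv) (hb N' v hv)
    · intro a b _ hb N' v hv
      have h1 : (a • b : ↥S) = a * b := rfl
      rw [h1]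
      rw [show (((a * b : ↥S) : Module.End k ↥A) v) = (a : Module.End k ↥A) ((b : Module.End k ↥A) v)
        from rfl]
      exact hinv _ a.1 a.2 _ (hb N' v hv)
  have hlcs2 : (⁅(⊤ : LieIdeal k g), A⁆ : LieSubmodule k g g)
      = LieModule.lowerCentralSeries k g g 2 := by
    rw [show (2:ℕ) = 1 + 1 from rfl, LieModule.lowerCentralSeries_succ, hAdef]
  have hlcs3 : (⁅(⊤ : LieIdeal k g), LieModule.lowerCentralSeries k g g 2⁆ : LieSubmodule k g g)
      = B := by
    rw [hBdef, ← LieModule.lowerCentralSeries_succ]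
  have hπB : ∀ v : ↥A, ((πe v : ↥A) : g) ∈ B := by
    intro v
    have h1 := hIstep P0 hP0I A v v.2
    rw [hlcs2] at h1
    have h2 := hIstep P0 hP0I (LieModule.lowerCentralSeries k g g 2) _ h1
    rw [hlcs3] at h2
    rw [hπP0]
    exact h2
  have hπid : ∀ v : ↥A, (v : g) ∈ B → πe v = v := by
    intro v hv
    rw [hπP0, hP0id v hv, hP0id v hv]
  have hidem : ∀ v : ↥A, πe (πe v) = πe v := fun v => hπid _ (hπB v)
  have hπκ0 : ∀ v : ↥A, πe (κe v) = 0 := by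
    intro v
    rw [hκapp, map_sub, hidem, sub_self]
  have hκπ0 : ∀ v : ↥A, κe (πe v) = 0 := by
    intro v
    rw [hκapp, hidem, sub_self]
  have hF3 : ∀ (x y : g) (v : ↥A), ρb x (ρb y (κe v)) = 0 := by
    intro x y v
    have h1 : ρb x (ρb y (κe v)) = πe (ρb x (ρb y (κe v))) := (hπid _ (hρρB x y _)).symm
    rw [h1, hρπ, hρπ, hπκ0]
    simp
  -- T
  set T : g →ₗ[k] ↥A :=
    ∑ i : Fin n, (((P0 * fc i : ↥S) : Module.End k ↥A) ∘ₗ (cb (w i))) with hTdef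
  have hT : ∀ y : g, T y = ∑ i, ((P0 * fc i : ↥S) : Module.End k ↥A) (cb (w i) y) := by
    intro y
    rw [hTdef]
    simp [LinearMap.sum_apply, LinearMap.comp_apply]
  have hTu : ∀ u : ↥A, T (u : g) = 0 := by
    intro u
    rw [hT]
    refine Finset.sum_eq_zero ?_
    intro i _
    rw [hcbu, map_zero]
  have hπsum : ∀ v : ↥A, πe v = ∑ i, ((P0 * fc i : ↥S) : Module.End k ↥A) (ρb (w i) v) := by
    intro v
    have h1 : (P0 * P0 : ↥S) = ∑ i, (P0 * fc i) * ρsub (w i) := by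
      calc (P0 * P0 : ↥S) = P0 * (∑ i, fc i * ρsub (w i)) := by rw [← hP0eq]
        _ = ∑ i, P0 * (fc i * ρsub (w i)) := Finset.mul_sum _ _ _
        _ = ∑ i, (P0 * fc i) * ρsub (w i) := Finset.sum_congr rfl (fun i _ => by rw [mul_assoc])
    have h2 : πe v = ((∑ i, (P0 * fc i) * ρsub (w i) : ↥S) : Module.End k ↥A) v := by
      rw [hπedef, h1]
    rw [h2]
    have h3 : ((∑ i, (P0 * fc i) * ρsub (w i) : ↥S) : Module.End k ↥A)
        = ∑ i, (((P0 * fc i) * ρsub (w i) : ↥S) : Module.End k ↥A) := by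
      exact map_sum S.val _ _
    rw [h3, LinearMap.sum_apply]
    exact Finset.sum_congr rfl (fun i _ => by rw [hSmulapp])
  have hδT : ∀ x y : g, ρb x (T y) - ρb y (T x) = πe (cb x y) := by
    intro x y
    have hterm : ∀ i : Fin n,
        ρb x (((P0 * fc i : ↥S) : Module.End k ↥A) (cb (w i) y))
          = ((P0 * fc i : ↥S) : Module.End k ↥A) (ρb (w i) (cb x y))
            + ρb y (((P0 * fc i : ↥S) : Module.End k ↥A) (cb (w i) x)) := by
      intro i
      rw [← hcommSρ, ← hcommSρ]
      rw [← map_add]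
      congr 1
      have hc := hcoc x (w i) y
      have h1 : ρb (w i) (cb y x) = - ρb (w i) (cb x y) := by rw [hskew y x, map_neg]
      have h2 : ρb y (cb x (w i)) = - ρb y (cb (w i) x) := by rw [hskew x (w i), map_neg]
      rw [h1, h2] at hc
      have h3 : ρb x (cb (w i) y) - (ρb (w i) (cb x y) + ρb y (cb (w i) x)) = 0 := by
        rw [← hc]; abel
      have h4 := sub_eq_zero.mp h3
      exact h4
    rw [hT, hT, map_sum, map_sum]
    rw [Finset.sum_congr rfl (fun i _ => hterm i), Finset.sum_add_distrib]
    rw [← hπsum]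
    have h5 : ∑ i, ρb y (((P0 * fc i : ↥S) : Module.End k ↥A) (cb (w i) x))
        = ρb y (∑ i, ((P0 * fc i : ↥S) : Module.End k ↥A) (cb (w i) x)) := (map_sum _ _ _).symm
    rw [h5]
    abel
  -- the product
  let ρbil : g →ₗ[k] ↥A →ₗ[k] ↥A := ρb
  set ν : g →ₗ[k] g →ₗ[k] ↥A :=
    (2⁻¹ : k) • (cb.compr₂ κe) + ρbil.compl₂ (πe ∘ₗ T) + ρbil.compl₂ (πe ∘ₗ rpr)
      + ((2:k)/3) • ρbil.compl₂ (κe ∘ₗ rpr)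
      - (3⁻¹ : k) • (ρbil.compl₂ (κe ∘ₗ rpr)).flip with hνdef
  have hν_app : ∀ x y : g, ν x y = (2⁻¹ : k) • κe (cb x y) + ρb x (πe (T y))
      + ρb x (πe (rpr y)) + ((2:k)/3) • ρb x (κe (rpr y))
      - (3⁻¹ : k) • ρb y (κe (rpr x)) := by
    intro x y
    rw [hνdef]
    simp only [LinearMap.sub_apply, LinearMap.add_apply, LinearMap.smul_apply,
      LinearMap.compl₂_apply, LinearMap.compr₂_apply, LinearMap.flip_apply,
      LinearMap.comp_apply]
    rfl
  set μ : g →ₗ[k] g →ₗ[k] g := ν.compr₂ jmap with hμdef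
  have hμ : ∀ x y : g, μ x y = ((ν x y : ↥A) : g) := by
    intro x y
    rw [hμdef]
    simp only [LinearMap.compr₂_apply]
    rfl
  have hν_j1 : ∀ (x : g) (u : ↥A), ν x (u : g)
      = ρb x (πe u) + ((2:k)/3) • ρb x (κe u) := by
    intro x u
    rw [hν_app, hcbu, hTu, hjr, hρ0]
    simp
  have hν_j2 : ∀ (u : ↥A) (z : g), ν (u : g) z = -((3⁻¹ : k) • ρb z (κe u)) := by
    intro u z
    rw [hν_app, hcub, hjr, hρ0, hρ0, hρ0]
    simp
  have hπν : ∀ y z : g, πe (ν y z) = ρb y (πe (T z)) + ρb y (πe (rpr z)) := by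
    intro y z
    rw [hν_app]
    simp only [map_add, map_sub, map_smul, hρπ, hidem, hπκ0, map_zero, smul_zero,
      add_zero, zero_add, sub_zero]
  have hκν : ∀ y z : g, κe (ν y z) = (2⁻¹ : k) • κe (cb y z)
      + ((2:k)/3) • ρb y (κe (rpr z)) - (3⁻¹ : k) • ρb z (κe (rpr y)) := by
    intro y z
    have h0 : κe (ν y z) = ν y z - πe (ν y z) := hκapp _
    rw [h0, hπν, hν_app]
    abel
  have hassoc : ∀ x y z : g, ν x ((ν y z : ↥A) : g) - ν ((ν x y : ↥A) : g) z
      = ρb x (ρb y (πe (T z))) + ρb x (ρb y (πe (rpr z)))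
        + (3⁻¹ : k) • ρb x (κe (cb y z)) + (6⁻¹ : k) • ρb z (κe (cb x y)) := by
    intro x y z
    rw [hν_j1 x (ν y z), hν_j2 (ν x y) z, hπν y z, hκν y z, hκν x y]
    simp only [map_add, map_sub, map_smul, hF3, smul_zero, sub_zero, add_zero, zero_add,
      smul_neg, neg_zero]
    match_scalars <;> ring
  have key : ∀ x y z : g,
      ρb x (κe (cb y z)) - ρb y (κe (cb x z)) + ρb z (κe (cb x y)) = 0 := by
    intro x y z
    rw [← hρκ, ← hρκ, ← hρκ, ← map_sub, ← map_add]
    have h1 : ρb x (cb y z) - ρb y (cb x z) + ρb z (cb x y) = 0 := by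
      have h2 := hcoc x y z
      have h3 : ρb y (cb z x) = - ρb y (cb x z) := by rw [hskew z x, map_neg]
      rw [h3] at h2
      rw [← h2]
      abel
    rw [h1, map_zero]
  have hbrack : ∀ x y : g, rpr ⁅x, y⁆ = cb x y + ρb x (rpr y) - ρb y (rpr x) := by
    intro x y
    apply Subtype.ext
    have hc1 : ((cb x y + ρb x (rpr y) - ρb y (rpr x) : ↥A) : g)
        = ((cb x y : ↥A) : g) + ((ρb x (rpr y) : ↥A) : g) - ((ρb y (rpr x) : ↥A) : g) := rfl
    rw [hc1, hrprcoe _ (hbr x y), hcb, hρ, hρ]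
    have hab : ⁅((rpr x : ↥A) : g), ((rpr y : ↥A) : g)⁆ = 0 :=
      habel _ _ (rpr x).2 (rpr y).2
    rw [hqe_apply x, hqe_apply y, sub_lie, lie_sub, lie_sub, hab]
    rw [show ⁅y, ((rpr x : ↥A) : g)⁆ = -⁅((rpr x : ↥A) : g), y⁆ from (lie_skew _ _).symm]
    abel
  refine ⟨μ, ?_, ?_, ?_⟩
  · intro x y z
    simp only [hμ]
    have hsub : ∀ a b : ↥A, (a : g) - (b : g) = ((a - b : ↥A) : g) := fun _ _ => rfl
    rw [hsub, hsub]
    have hmain : ν x ((ν y z : ↥A) : g) - ν ((ν x y : ↥A) : g) z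
        = ν y ((ν x z : ↥A) : g) - ν ((ν y x : ↥A) : g) z := by
      rw [hassoc x y z, hassoc y x z]
      rw [hρρcomm x y (πe (T z)), hρρcomm x y (πe (rpr z))]
      have hsk : ρb z (κe (cb y x)) = - ρb z (κe (cb x y)) := by
        rw [hskew y x, map_neg, map_neg]
      rw [hsk]
      have hx1 : ρb x (κe (cb y z)) = ρb y (κe (cb x z)) - ρb z (κe (cb x y)) := by
        have h := key x y z
        rw [eq_sub_iff_add_eq, ← sub_eq_zero, ← h]
        abel
      rw [hx1]
      match_scalars <;> ring
    exact congrArg (fun u : ↥A => (u : g)) hmain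
  · intro x y
    simp only [hμ]
    have hsub : ∀ a b : ↥A, (a : g) - (b : g) = ((a - b : ↥A) : g) := fun _ _ => rfl
    rw [hsub]
    have hmain : ν x y - ν y x = rpr ⁅x, y⁆ := by
      have e1 : ρb x (πe (T y)) = ρb y (πe (T x)) + πe (cb x y) := by
        have h1 : ρb x (πe (T y)) - ρb y (πe (T x)) = πe (cb x y) := by
          rw [← hρπ, ← hρπ, ← map_sub, hδT, hidem]
        rw [← h1]
        abel
      have hbrack' : rpr ⁅x, y⁆ = κe (cb x y) + πe (cb x y)
          + (ρb x (πe (rpr y)) + ρb x (κe (rpr y)))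
          - (ρb y (πe (rpr x)) + ρb y (κe (rpr x))) := by
        rw [hbrack x y]
        have h2 : ∀ v : ↥A, κe v + πe v = v := fun v => by rw [hκapp]; abel
        have h2' : ∀ v : ↥A, πe v + κe v = v := fun v => by rw [hκapp]; abel
        rw [← map_add (ρb x), ← map_add (ρb y)]
        rw [h2' (rpr y), h2' (rpr x), h2]
      have h3' : κe (cb y x) = -κe (cb x y) := by rw [hskew y x, map_neg]
      rw [hν_app x y, hν_app y x, e1, hbrack', h3']
      match_scalars <;> ring
    rw [hmain]
    exact hrprcoe _ (hbr x y)
  · intro x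
    refine ⟨3, ?_⟩
    apply LinearMap.ext
    intro z
    have h1 : ∀ u : ↥A, (LinearMap.flip μ x) (u : g)
        = ((-((3⁻¹ : k) • ρb x (κe u)) : ↥A) : g) := by
      intro u
      show μ (u : g) x = _
      rw [hμ, hν_j2]
    have h2 : (LinearMap.flip μ x) z = ((ν z x : ↥A) : g) := by
      show μ z x = _
      rw [hμ]
    have hzero : ρb x (κe (-((3⁻¹ : k) • ρb x (κe (ν z x))))) = 0 := by
      rw [map_neg, map_smul, hρκ, map_neg, map_smul, hF3]
      simp
    rw [pow_succ, pow_succ, pow_one, Module.End.mul_apply, Module.End.mul_apply, h2, h1, h1]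
    rw [hzero]
    simp
end
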